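/- arXiv:1202.4131 — 7 statements merged into one kernel-verified Lean document; each statement's English description precedes it below -/
import Mathlib

section
/- Let U ⊆ ℝ be open, x₀ ∈ U, and let b : U → ℝ be continuous with b(x₀) ≠ 0. Then the initial value problem x'(t) = b(x(t)), x(0) = x₀ has locally at most one forward solution: there exists δ > 0 such that any two differentiable functions x₁, x₂ : [0,δ] → U with x₁(0) = x₂(0) = x₀ and xᵢ'(t) = b(xᵢ(t)) for all t ∈ [0,δ] (i = 1,2) coincide on [0,δ]. -/
open Set Filter Topology

lemma apriori_bound_aux (x₀ ε r δ : ℝ) (hε : 0 < ε)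
    (hδ : 0 < δ) (hδr : 3 * r * δ ≤ ε / 2)
    (b : ℝ → ℝ) (hbK : ∀ y ∈ Icc (x₀ - ε) (x₀ + ε), |b y| ≤ 3 * r)
    (x : ℝ → ℝ) (hx0 : x 0 = x₀)
    (hx : ∀ t ∈ Icc (0:ℝ) δ, HasDerivWithinAt x (b (x t)) (Icc 0 δ) t) :
    ∀ t ∈ Icc (0:ℝ) δ, |x t - x₀| ≤ ε := by
  by_contra h
  push_neg at h
  obtain ⟨t₁, ht₁, ht₁ε⟩ := h
  have hxc : ContinuousOn x (Icc 0 δ) := fun t ht => (hx t ht).continuousWithinAt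
  have hfc : ContinuousOn (fun t => |x t - x₀|) (Icc 0 δ) :=
    ((hxc.sub continuousOn_const).abs)
  set B : Set ℝ := Icc 0 δ ∩ (fun t => |x t - x₀|) ⁻¹' (Ici ε) with hB
  have hBclosed : IsClosed B := hfc.preimage_isClosed_of_isClosed isClosed_Icc isClosed_Ici
  have hBne : B.Nonempty := ⟨t₁, ht₁, le_of_lt ht₁ε⟩
  have hBcomp : IsCompact B := isCompact_Icc.of_isClosed_subset hBclosed inter_subset_left
  obtain ⟨t₀, ht₀B, ht₀least⟩ := hBcomp.exists_isLeast hBne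
  obtain ⟨⟨ht₀0, ht₀δ⟩, ht₀ε⟩ := ht₀B
  have ht₀pos : 0 < t₀ := by
    rcases ht₀0.lt_or_eq with h | h
    · exact h
    · exfalso
      have : |x 0 - x₀| = 0 := by simp [hx0]
      have := ht₀ε
      rw [← h] at this
      simp only [mem_preimage, mem_Ici] at this
      rw [hx0, sub_self, abs_zero] at this
      linarith
  -- for u < t₀ in [0, δ], |x u - x₀| < ε
  have hlt : ∀ u ∈ Ico (0:ℝ) t₀, |x u - x₀| < ε := by
    intro u hu
    by_contra hcon
    push_neg at hcon
    have : u ∈ B := ⟨⟨hu.1, hu.2.le.trans ht₀δ⟩, hcon⟩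
    exact absurd (ht₀least this) (not_le.mpr hu.2)
  -- at t₀, by continuity |x t₀ - x₀| ≤ ε
  have ht₀le : |x t₀ - x₀| ≤ ε := by
    have hsub : Ico (0:ℝ) t₀ ⊆ Icc 0 δ := fun u hu => ⟨hu.1, hu.2.le.trans ht₀δ⟩
    have hcw : ContinuousWithinAt (fun t => |x t - x₀|) (Ico 0 t₀) t₀ :=
      ((hfc t₀ ⟨ht₀0, ht₀δ⟩).mono hsub)
    have hne : (𝓝[Ico (0:ℝ) t₀] t₀).NeBot := by
      apply mem_closure_iff_nhdsWithin_neBot.mp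
      rw [closure_Ico (ne_of_gt ht₀pos).symm]
      exact ⟨ht₀0, le_refl _⟩
    exact le_of_tendsto hcw (eventually_nhdsWithin_of_forall fun u hu => (hlt u hu).le)
  have hmaps : ∀ u ∈ Icc (0:ℝ) t₀, x u ∈ Icc (x₀ - ε) (x₀ + ε) := by
    intro u hu
    have : |x u - x₀| ≤ ε := by
      rcases hu.2.lt_or_eq with h | h
      · exact (hlt u ⟨hu.1, h⟩).le
      · rw [h]; exact ht₀le
    constructor <;> [linarith [abs_le.mp this]; linarith [(abs_le.mp this).2]]
  -- mean value inequality on [0, t₀]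
  have hmvt : ‖x t₀ - x 0‖ ≤ (3 * r) * ‖t₀ - 0‖ := by
    apply Convex.norm_image_sub_le_of_norm_hasDerivWithin_le
      (f' := fun u => b (x u)) (s := Icc 0 t₀)
      (fun u hu => (hx u ⟨hu.1, hu.2.trans ht₀δ⟩).mono (Icc_subset_Icc_right ht₀δ))
      (fun u hu => by rw [Real.norm_eq_abs]; exact hbK _ (hmaps u hu))
      (convex_Icc 0 t₀) ⟨le_refl 0, ht₀pos.le⟩ ⟨ht₀pos.le, le_refl t₀⟩
  rw [hx0, Real.norm_eq_abs, Real.norm_eq_abs, sub_zero] at hmvt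
  have h1 : ε ≤ |x t₀ - x₀| := ht₀ε
  have h2 : 3 * r * t₀ ≤ 3 * r * δ := by
    nlinarith [abs_nonneg (x t₀ - x₀), abs_nonneg t₀, abs_of_pos ht₀pos]
  rw [abs_of_pos ht₀pos] at hmvt
  linarith


/-- if `b` is continuous on an open set `U ∋ x₀` and `b x₀ ≠ 0`, then the
initial value problem `x' = b ∘ x`, `x 0 = x₀` has locally at most one forward solution. -/
theorem local_uniqueness_of_nonvanishing_field
    (U : Set ℝ) (hU : IsOpen U) (x₀ : ℝ) (hx₀ : x₀ ∈ U)
    (b : ℝ → ℝ) (hb : ContinuousOn b U) (hb0 : b x₀ ≠ 0) :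
    ∃ δ > (0 : ℝ), ∀ x₁ x₂ : ℝ → ℝ,
      MapsTo x₁ (Icc 0 δ) U → MapsTo x₂ (Icc 0 δ) U →
      x₁ 0 = x₀ → x₂ 0 = x₀ →
      (∀ t ∈ Icc (0:ℝ) δ, HasDerivWithinAt x₁ (b (x₁ t)) (Icc 0 δ) t) →
      (∀ t ∈ Icc (0:ℝ) δ, HasDerivWithinAt x₂ (b (x₂ t)) (Icc 0 δ) t) →
      EqOn x₁ x₂ (Icc 0 δ) := by
  set r := |b x₀| / 2 with hr_def
  have hr : 0 < r := half_pos (abs_pos.mpr hb0)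
  have hbx₀cont : ContinuousAt b x₀ := hb.continuousAt (hU.mem_nhds hx₀)
  obtain ⟨ε₀, hε₀pos, hball⟩ := Metric.continuousAt_iff.mp hbx₀cont r hr
  obtain ⟨ε₁, hε₁pos, hball₁⟩ := Metric.isOpen_iff.mp hU x₀ hx₀
  set ε := min ε₀ ε₁ / 4 with hε_def
  have hε : 0 < ε := by positivity
  set K := Icc (x₀ - 2*ε) (x₀ + 2*ε) with hK_def
  have hmin : 0 < min ε₀ ε₁ := lt_min hε₀pos hε₁pos
  have h2ε : 2 * ε = min ε₀ ε₁ / 2 := by rw [hε_def]; ring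
  have hKball : ∀ y ∈ K, dist y x₀ < min ε₀ ε₁ := by
    intro y hy
    simp only [hK_def, mem_Icc] at hy
    rw [Real.dist_eq, abs_lt]
    constructor <;> linarith
  have hKU : K ⊆ U := fun y hy =>
    hball₁ (Metric.mem_ball.mpr ((hKball y hy).trans_le (min_le_right _ _)))
  have hbr : ∀ y ∈ K, |b y - b x₀| < r := by
    intro y hy
    have := hball ((hKball y hy).trans_le (min_le_left _ _))
    rwa [Real.dist_eq] at this
  have hbne : ∀ y ∈ K, b y ≠ 0 := by
    intro y hy h0
    have h1 := hbr y hy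
    rw [h0, zero_sub, abs_neg] at h1
    rw [hr_def] at h1
    linarith
  have hbbd : ∀ y ∈ Icc (x₀ - ε) (x₀ + ε), |b y| ≤ 3 * r := by
    intro y hy
    have hyK : y ∈ K := by
      simp only [hK_def, mem_Icc]; simp only [mem_Icc] at hy
      constructor <;> linarith
    have h1 := (hbr y hyK).le
    have h2 : |b y| - |b x₀| ≤ |b y - b x₀| := by
      have := abs_sub_abs_le_abs_sub (b y) (b x₀)
      linarith
    rw [hr_def] at *
    linarith
  refine ⟨ε / (6 * r), by positivity, ?_⟩
  set δ := ε / (6 * r) with hδ_def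
  have hδ : 0 < δ := by positivity
  have hδr : 3 * r * δ ≤ ε / 2 := by
    rw [hδ_def]
    have : 3 * r * (ε / (6 * r)) = ε / 2 := by
      field_simp
      ring
    rw [this]
  -- the antiderivative of 1/b
  set F : ℝ → ℝ := fun y => ∫ z in x₀..y, (b z)⁻¹ with hF_def
  set J := Ioo (x₀ - 2*ε) (x₀ + 2*ε) with hJ_def
  have hJopen : IsOpen J := isOpen_Ioo
  have hJK : J ⊆ K := Ioo_subset_Icc_self
  have hcontinv : ContinuousOn (fun z => (b z)⁻¹) K :=
    (hb.mono hKU).inv₀ hbne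
  have hx₀K : x₀ ∈ K := by
    simp only [hK_def, mem_Icc]; constructor <;> linarith
  have hF : ∀ y ∈ J, HasDerivAt F (b y)⁻¹ y := by
    intro y hy
    have huIcc : uIcc x₀ y ⊆ K := uIcc_subset_Icc hx₀K (hJK hy)
    exact intervalIntegral.integral_hasDerivAt_right
      ((hcontinv.mono huIcc).intervalIntegrable)
      ((hcontinv.mono hJK).stronglyMeasurableAtFilter hJopen y hy)
      ((hcontinv.mono hJK).continuousAt (hJopen.mem_nhds hy))
  have hsmall : Icc (x₀ - ε) (x₀ + ε) ⊆ J := by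
    intro y hy; simp only [mem_Icc] at hy; simp only [hJ_def, mem_Ioo]
    constructor <;> linarith
  have hFcont : ContinuousOn F (Icc (x₀ - ε) (x₀ + ε)) :=
    fun y hy => ((hF y (hsmall hy)).continuousAt).continuousWithinAt
  have hFinj : InjOn F (Icc (x₀ - ε) (x₀ + ε)) := by
    have hint : interior (Icc (x₀ - ε) (x₀ + ε)) ⊆ J := by
      rw [interior_Icc]; exact fun y hy => hsmall (Ioo_subset_Icc_self hy)
    rcases hb0.lt_or_gt with hneg | hpos
    · -- b x₀ < 0, so b < 0 near x₀, F strictly anti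
      refine (strictAntiOn_of_deriv_neg (convex_Icc _ _) hFcont ?_).injOn
      intro y hy
      rw [(hF y (hint hy)).deriv]
      have hyK : y ∈ K := hJK (hint hy)
      have h1 := hbr y hyK
      rw [abs_lt, hr_def, abs_of_neg hneg] at h1
      exact inv_neg''.mpr (by linarith [h1.2])
    · refine (strictMonoOn_of_deriv_pos (convex_Icc _ _) hFcont ?_).injOn
      intro y hy
      rw [(hF y (hint hy)).deriv]
      have hyK : y ∈ K := hJK (hint hy)
      have h1 := hbr y hyK
      rw [abs_lt, hr_def, abs_of_pos hpos] at h1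
      exact inv_pos.mpr (by linarith [h1.1])
  -- the key identity: any solution satisfies F (x t) = t
  have key : ∀ x : ℝ → ℝ, x 0 = x₀ →
      (∀ t ∈ Icc (0:ℝ) δ, HasDerivWithinAt x (b (x t)) (Icc 0 δ) t) →
      ∀ t ∈ Icc (0:ℝ) δ, x t ∈ Icc (x₀ - ε) (x₀ + ε) ∧ F (x t) = t := by
    intro x hx0 hx
    have hbnd := apriori_bound_aux x₀ ε r δ hε hδ hδr b hbbd x hx0 hx
    have hmem : ∀ s ∈ Icc (0:ℝ) δ, x s ∈ Icc (x₀ - ε) (x₀ + ε) := by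
      intro s hs
      have := abs_le.mp (hbnd s hs)
      simp only [mem_Icc]; constructor <;> linarith [this.1, this.2]
    intro t ht
    refine ⟨hmem t ht, ?_⟩
    have hg : ∀ s ∈ Icc (0:ℝ) δ,
        HasDerivWithinAt (fun u => F (x u) - u) 0 (Icc 0 δ) s := by
      intro s hs
      have h1 : HasDerivWithinAt (fun u => F (x u))
          ((b (x s))⁻¹ * b (x s)) (Icc 0 δ) s :=
        (hF (x s) (hsmall (hmem s hs))).comp_hasDerivWithinAt s (hx s hs)
      have h2 := h1.sub (hasDerivWithinAt_id s (Icc 0 δ))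
      have h3 : (b (x s))⁻¹ * b (x s) - 1 = 0 := by
        rw [inv_mul_cancel₀ (hbne _ (hJK (hsmall (hmem s hs))))]; ring
      rw [h3] at h2
      exact h2
    have h0mem : (0:ℝ) ∈ Icc (0:ℝ) δ := ⟨le_refl 0, hδ.le⟩
    have hconst := Convex.norm_image_sub_le_of_norm_hasDerivWithin_le
      hg (C := 0) (fun s _ => by simp) (convex_Icc 0 δ) h0mem ht
    simp only [zero_mul, norm_le_zero_iff, sub_eq_zero] at hconst
    have hFx₀ : F x₀ = 0 := by
      simp only [hF_def]; exact intervalIntegral.integral_same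
    rw [hx0, hFx₀] at hconst
    linarith [hconst]
  intro x₁ x₂ _ _ h10 h20 hd1 hd2 t ht
  obtain ⟨hm1, hf1⟩ := key x₁ h10 hd1 t ht
  obtain ⟨hm2, hf2⟩ := key x₂ h20 hd2 t ht
  exact hFinj hm1 hm2 (by rw [hf1, hf2])
end

section
/- Let b : ℝ → ℝ be continuous, x₀ ∈ ℝ with b(x₀) = 0. Suppose there exists r > 0 such that either (b(x) > 0 for all x ∈ (x₀, x₀+r] and y ↦ 1/b(y) is Lebesgue integrable on (x₀, x₀+r)) or (b(x) < 0 for all x ∈ [x₀−r, x₀) and y ↦ 1/b(y) is Lebesgue integrable on (x₀−r, x₀)). Then there exist T > 0 and a differentiable x : [0,T] → ℝ with x(0) = x₀, x'(t) = b(x(t)) for all t ∈ [0,T], and x not identically equal to x₀; i.e., there are solutions different from the constant solution. -/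
open Set MeasureTheory

open intervalIntegral Filter Topology in
theorem pos_case_aux (b : ℝ → ℝ) (hb : Continuous b) (x₀ : ℝ) (hb0 : b x₀ = 0)
    (r : ℝ) (hr : 0 < r)
    (hpos : ∀ x ∈ Ioc x₀ (x₀ + r), 0 < b x)
    (hint : IntegrableOn (fun y => 1 / b y) (Ioo x₀ (x₀ + r))) :
    ∃ T > (0 : ℝ), ∃ x : ℝ → ℝ,
      x 0 = x₀ ∧
      (∀ t ∈ Icc (0:ℝ) T, HasDerivWithinAt x (b (x t)) (Icc 0 T) t) ∧
      ∃ t ∈ Icc (0:ℝ) T, x t ≠ x₀ := by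
  set c := x₀ + r with hc
  have hx₀c : x₀ < c := by simp [hc, hr]
  set m := x₀ + r / 2 with hm
  have hx₀m : x₀ < m := by simp [hm]; linarith
  have hmc : m < c := by simp [hm, hc]; linarith
  have hintIcc : IntegrableOn (fun y => 1 / b y) (Icc x₀ c) := by
    rwa [integrableOn_Icc_iff_integrableOn_Ioo]
  have hII : ∀ x ∈ Icc x₀ c, IntervalIntegrable (fun y => 1 / b y) volume x₀ x := by
    intro x hx
    refine (intervalIntegrable_iff').mpr (hintIcc.mono_set ?_)
    rw [uIcc_of_le hx.1]
    exact Icc_subset_Icc le_rfl hx.2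
  set F : ℝ → ℝ := fun x => ∫ y in x₀..x, 1 / b y with hF
  have hF0 : F x₀ = 0 := integral_same
  have hFsub : ∀ x ∈ Icc x₀ c, ∀ x' ∈ Icc x₀ c, F x' - F x = ∫ y in x..x', 1 / b y := by
    intro x hx x' hx'
    rw [integral_interval_sub_left (hII x' hx') (hII x hx)]
  have hposIoo : ∀ x ∈ Icc x₀ c, ∀ x' ∈ Icc x₀ c, ∀ y ∈ Ioo x x', 0 < 1 / b y := by
    intro x hx x' hx' y hy
    have : 0 < b y := hpos y ⟨lt_of_le_of_lt hx.1 hy.1, le_of_lt (lt_of_lt_of_le hy.2 hx'.2)⟩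
    positivity
  have hFmono : StrictMonoOn F (Icc x₀ c) := by
    intro x hx x' hx' hlt
    have h1 : 0 < F x' - F x := by
      rw [hFsub x hx x' hx']
      exact intervalIntegral_pos_of_pos_on
        ((hII x' hx').symm.trans (hII x hx)).symm (fun y hy => hposIoo x hx x' hx' y hy) hlt
    linarith
  have hFcont : ContinuousOn F (Icc x₀ c) := by
    have := intervalIntegral.continuousOn_primitive_interval
      (f := fun y => 1 / b y) (a := x₀) (b := c) (μ := volume)
      (by rwa [uIcc_of_le (le_of_lt hx₀c)])
    rwa [uIcc_of_le (le_of_lt hx₀c)] at this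
  set Tf := F c with hTf
  set T := F m with hT
  have hmIcc : m ∈ Icc x₀ c := ⟨le_of_lt hx₀m, le_of_lt hmc⟩
  have hx₀Icc : x₀ ∈ Icc x₀ c := ⟨le_rfl, le_of_lt hx₀c⟩
  have hcIcc : c ∈ Icc x₀ c := ⟨le_of_lt hx₀c, le_rfl⟩
  have hTpos : 0 < T := by
    have := hFmono hx₀Icc hmIcc hx₀m; rwa [hF0] at this
  have hTlt : T < Tf := hFmono hmIcc hcIcc hmc
  have hTfpos : 0 < Tf := hTpos.trans hTlt
  -- image of Icc
  have himage : F '' Icc x₀ c = Icc 0 Tf := by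
    apply Subset.antisymm
    · rintro y ⟨u, hu, rfl⟩
      exact ⟨by rw [← hF0]; exact hFmono.monotoneOn hx₀Icc hu hu.1,
        hFmono.monotoneOn hu hcIcc hu.2⟩
    · have := intermediate_value_Icc (le_of_lt hx₀c) hFcont
      rwa [hF0] at this
  have hinj : InjOn F (Icc x₀ c) := hFmono.injOn
  set g : ℝ → ℝ := Function.invFunOn F (Icc x₀ c) with hg
  have hgmem : ∀ y ∈ Icc 0 Tf, g y ∈ Icc x₀ c := by
    intro y hy
    have : y ∈ F '' Icc x₀ c := himage ▸ hy
    obtain ⟨u, hu, huy⟩ := this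
    exact Function.invFunOn_mem ⟨u, hu, huy⟩
  have hFg : ∀ y ∈ Icc 0 Tf, F (g y) = y := by
    intro y hy
    have : y ∈ F '' Icc x₀ c := himage ▸ hy
    obtain ⟨u, hu, huy⟩ := this
    exact Function.invFunOn_eq ⟨u, hu, huy⟩
  have hgF : ∀ u ∈ Icc x₀ c, g (F u) = u := fun u hu => hinj.leftInvOn_invFunOn hu
  have hg0 : g 0 = x₀ := by rw [← hF0]; exact hgF x₀ hx₀Icc
  have hgT : g T = m := hgF m hmIcc
  have hgmono : StrictMonoOn g (Icc 0 Tf) := by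
    intro t₁ h₁ t₂ h₂ hlt
    by_contra hle
    push_neg at hle
    have := hFmono.monotoneOn (hgmem t₂ h₂) (hgmem t₁ h₁) hle
    rw [hFg t₁ h₁, hFg t₂ h₂] at this
    exact absurd this (not_le.mpr hlt)
  -- images of open intervals
  have hFIoo : F '' Ioo x₀ c = Ioo 0 Tf := by
    apply Subset.antisymm
    · rintro y ⟨u, hu, rfl⟩
      refine ⟨?_, ?_⟩
      · rw [← hF0]; exact hFmono hx₀Icc ⟨le_of_lt hu.1, le_of_lt hu.2⟩ hu.1
      · exact hFmono ⟨le_of_lt hu.1, le_of_lt hu.2⟩ hcIcc hu.2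
    · intro y hy
      have hy' : y ∈ Icc 0 Tf := ⟨le_of_lt hy.1, le_of_lt hy.2⟩
      have hmem : y ∈ F '' Icc x₀ c := himage ▸ hy'
      obtain ⟨u, hu, rfl⟩ := hmem
      refine ⟨u, ⟨?_, ?_⟩, rfl⟩
      · rcases eq_or_lt_of_le hu.1 with h | h
        · exfalso; rw [← h, hF0] at hy; exact lt_irrefl 0 hy.1
        · exact h
      · rcases eq_or_lt_of_le hu.2 with h | h
        · exfalso; rw [h] at hy; exact lt_irrefl _ hy.2
        · exact h
  have hgIoo : g '' Ioo 0 Tf = Ioo x₀ c := by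
    rw [← hFIoo, hinj.invFunOn_image Ioo_subset_Icc_self]
  -- continuity of g on the interior
  have hgcont : ∀ t ∈ Ioo 0 Tf, ContinuousAt g t := by
    intro t ht
    have hgt : g t ∈ Ioo x₀ c := hgIoo ▸ mem_image_of_mem g ht
    refine StrictMonoOn.continuousAt_of_image_mem_nhds
      (hgmono.mono Ioo_subset_Icc_self) (isOpen_Ioo.mem_nhds ht) ?_
    rw [hgIoo]
    exact isOpen_Ioo.mem_nhds hgt
  -- derivative of g at interior points
  have hgderiv : ∀ t ∈ Ioo 0 Tf, HasDerivAt g (b (g t)) t := by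
    intro t ht
    have hgt : g t ∈ Ioo x₀ c := hgIoo ▸ mem_image_of_mem g ht
    have hbne : b (g t) ≠ 0 := ne_of_gt (hpos _ ⟨hgt.1, le_of_lt hgt.2⟩)
    have hcontb : ContinuousAt (fun y => 1 / b y) (g t) :=
      (continuousAt_const.div hb.continuousAt hbne)
    have hmeas : StronglyMeasurableAtFilter (fun y => 1 / b y) (𝓝 (g t)) volume :=
      (measurable_const.div hb.measurable).aestronglyMeasurable.stronglyMeasurableAtFilter
    have hFd : HasDerivAt F (1 / b (g t)) (g t) :=
      intervalIntegral.integral_hasDerivAt_right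
        (hII (g t) (Ioo_subset_Icc_self hgt)) hmeas hcontb
    have hev : ∀ᶠ y in nhds t, F (g y) = y := by
      filter_upwards [isOpen_Ioo.mem_nhds ht] with y hy
      exact hFg y (Ioo_subset_Icc_self hy)
    have := HasDerivAt.of_local_left_inverse (hgcont t ht) hFd
      (by positivity) hev
    simpa [one_div] using this
  -- derivative of g at 0 within the interval
  have hg0deriv : HasDerivWithinAt g (b (g 0)) (Icc 0 T) 0 := by
    rw [hg0, hb0]
    rw [hasDerivWithinAt_iff_tendsto_slope]
    rw [Metric.tendsto_nhds]
    intro ε hε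
    -- choose δ with b small on [x₀, x₀+δ]
    obtain ⟨δ', hδ', hδ''⟩ := Metric.continuousAt_iff.mp hb.continuousAt (ε / 2) (by linarith)
    set δ := min (δ' / 2) r with hδdef
    have hδpos : 0 < δ := lt_min (by linarith) hr
    have hδr : δ ≤ r := min_le_right _ _
    have hδIcc : x₀ + δ ∈ Icc x₀ c := ⟨by linarith, by simp [hc]; linarith⟩
    have hbsmall : ∀ y ∈ Ioc x₀ (x₀ + δ), b y < ε / 2 := by
      intro y hy
      have : dist y x₀ < δ' := by
        rw [Real.dist_eq, abs_of_pos (by linarith [hy.1])]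
        have : δ ≤ δ' / 2 := min_le_left _ _
        linarith [hy.2]
      have := hδ'' this
      rw [Real.dist_eq, hb0, sub_zero] at this
      exact lt_of_le_of_lt (le_abs_self _) this
    have hFδpos : 0 < F (x₀ + δ) := by
      have := hFmono hx₀Icc hδIcc (by linarith)
      rwa [hF0] at this
    have hnhds : Iio (F (x₀ + δ)) ∈ nhdsWithin (0:ℝ) (Icc 0 T \ {0}) :=
      nhdsWithin_le_nhds (Iio_mem_nhds hFδpos)
    filter_upwards [hnhds, self_mem_nhdsWithin] with t htlt htmem
    have ht0 : 0 < t := lt_of_le_of_ne htmem.1.1 (fun h => htmem.2 h.symm)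
    have htT : t ≤ T := htmem.1.2
    have htTf : t ∈ Icc 0 Tf := ⟨le_of_lt ht0, le_of_lt (lt_of_le_of_lt htT hTlt)⟩
    have hgtIcc : g t ∈ Icc x₀ c := hgmem t htTf
    -- g t ≤ x₀ + δ
    have hgtδ : g t ≤ x₀ + δ := by
      have h1 : F (x₀ + δ) ∈ Icc 0 Tf := himage ▸ mem_image_of_mem F hδIcc
      have := hgmono.monotoneOn htTf h1 (le_of_lt htlt)
      rwa [hgF _ hδIcc] at this
    -- lower bound for t = F (g t)
    have hFeq : t = ∫ y in Ioc x₀ (g t), 1 / b y := by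
      conv_lhs => rw [← hFg t htTf]
      simp only [hF]
      exact intervalIntegral.integral_of_le hgtIcc.1
    have hint' : IntegrableOn (fun y => 1 / b y) (Ioc x₀ (g t)) :=
      hintIcc.mono_set ((Ioc_subset_Icc_self).trans (Icc_subset_Icc le_rfl hgtIcc.2))
    have hlow : ∀ y ∈ Ioc x₀ (g t), 2 / ε ≤ 1 / b y := by
      intro y hy
      have hby : 0 < b y := hpos y ⟨hy.1, le_trans hy.2 hgtIcc.2⟩
      have hby' : b y ≤ ε / 2 := le_of_lt (hbsmall y ⟨hy.1, le_trans hy.2 hgtδ⟩)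
      rw [div_le_div_iff₀ hε hby]
      nlinarith
    have hge := setIntegral_ge_of_const_le_real measurableSet_Ioc
      (by simp [Real.volume_Ioc] : volume (Ioc x₀ (g t)) ≠ ⊤) hlow hint'
    rw [measureReal_def, Real.volume_Ioc, ENNReal.toReal_ofReal (by linarith [hgtIcc.1])] at hge
    have hkey : (2 / ε) * (g t - x₀) ≤ t := by
      conv_rhs => rw [hFeq]
      exact hge
    -- conclude about the slope
    have hslope : slope g 0 t = (g t - x₀) / t := by
      simp [slope, hg0, div_eq_inv_mul]
    rw [dist_zero_right, hslope, Real.norm_eq_abs,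
      abs_of_nonneg (div_nonneg (by linarith [hgtIcc.1]) ht0.le)]
    rw [div_lt_iff₀ ht0]
    have h2 : g t - x₀ ≤ ε / 2 * t := by
      have h3 := mul_le_mul_of_nonneg_left hkey (half_pos hε).le
      calc g t - x₀ = ε / 2 * (2 / ε * (g t - x₀)) := by field_simp
        _ ≤ ε / 2 * t := h3
    nlinarith [h2, mul_pos hε ht0]
  refine ⟨T, hTpos, g, hg0, ?_, ⟨T, ⟨hTpos.le, le_rfl⟩, ?_⟩⟩
  · intro t ht
    rcases eq_or_lt_of_le ht.1 with h | h
    · rw [← h]; exact hg0deriv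
    · have htIoo : t ∈ Ioo 0 Tf := ⟨h, lt_of_le_of_lt ht.2 hTlt⟩
      exact (hgderiv t htIoo).hasDerivWithinAt
  · rw [hgT]; exact ne_of_gt hx₀m

/-- Osgood-type criterion, sufficiency: if `b` is continuous, `b x₀ = 0`, and on
one side of `x₀` the field does not vanish and `1/b` is integrable near `x₀`, then the IVP
`x' = b ∘ x`, `x 0 = x₀` admits a forward solution which is not identically `x₀`. -/
theorem exists_nonconstant_solution_of_integrable_reciprocal
    (b : ℝ → ℝ) (hb : Continuous b) (x₀ : ℝ) (hb0 : b x₀ = 0)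
    (h : ∃ r > (0 : ℝ),
      ((∀ x ∈ Ioc x₀ (x₀ + r), 0 < b x) ∧
        IntegrableOn (fun y => 1 / b y) (Ioo x₀ (x₀ + r))) ∨
      ((∀ x ∈ Ico (x₀ - r) x₀, b x < 0) ∧
        IntegrableOn (fun y => 1 / b y) (Ioo (x₀ - r) x₀))) :
    ∃ T > (0 : ℝ), ∃ x : ℝ → ℝ,
      x 0 = x₀ ∧
      (∀ t ∈ Icc (0:ℝ) T, HasDerivWithinAt x (b (x t)) (Icc 0 T) t) ∧
      ∃ t ∈ Icc (0:ℝ) T, x t ≠ x₀ := by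
  obtain ⟨r, hr, hcase⟩ := h
  rcases hcase with ⟨hpos, hint⟩ | ⟨hneg, hint⟩
  · exact pos_case_aux b hb x₀ hb0 r hr hpos hint
  · -- reflect: b' u = -(b (2x₀ - u))
    set b' : ℝ → ℝ := fun u => -(b (2 * x₀ - u)) with hb'def
    have hb' : Continuous b' := (hb.comp (by continuity)).neg
    have hb'0 : b' x₀ = 0 := by simp [hb'def, hb0, two_mul]
    have hpos' : ∀ x ∈ Ioc x₀ (x₀ + r), 0 < b' x := by
      intro x hx
      have : b (2 * x₀ - x) < 0 := hneg _ ⟨by linarith [hx.2], by linarith [hx.1]⟩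
      simp [hb'def]; linarith
    have hint' : IntegrableOn (fun y => 1 / b' y) (Ioo x₀ (x₀ + r)) := by
      have h1 : IntervalIntegrable (fun y => 1 / b y) volume (x₀ - r) x₀ := by
        rw [intervalIntegrable_iff']
        rw [uIcc_of_le (by linarith)]
        rwa [integrableOn_Icc_iff_integrableOn_Ioo]
      have h2 := (h1.comp_sub_left (2 * x₀)).neg
      have h3 : (2 * x₀ - (x₀ - r)) = x₀ + r := by ring
      have h4 : (2 * x₀ - x₀) = x₀ := by ring
      rw [h3, h4] at h2
      have h5 : IntervalIntegrable (fun y => 1 / b' y) volume x₀ (x₀ + r) := by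
        have := h2.symm
        refine this.congr ?_
        intro y _
        simp [hb'def, one_div]
      have := (intervalIntegrable_iff').mp h5
      rw [uIcc_of_le (by linarith)] at this
      rwa [integrableOn_Icc_iff_integrableOn_Ioo] at this
    obtain ⟨T, hT, g, hg0, hgderiv, t₀, ht₀, hne⟩ :=
      pos_case_aux b' hb' x₀ hb'0 r hr hpos' hint'
    refine ⟨T, hT, fun t => 2 * x₀ - g t, by show 2 * x₀ - g 0 = x₀; rw [hg0]; ring, ?_, ⟨t₀, ht₀, ?_⟩⟩
    · intro t ht
      have := (hgderiv t ht).const_sub (2 * x₀)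
      convert this using 1
      · rfl
      · rfl
      · simp [hb'def]
    · intro hcontra
      apply hne
      have hc2 : 2 * x₀ - g t₀ = x₀ := hcontra
      linarith
end

section
/- Let b : ℝ → ℝ be continuous with b(x₀) = 0, and assume x₀ is an isolated zero of b, i.e., there is ρ > 0 with b(x) ≠ 0 whenever 0 < |x − x₀| ≤ ρ. If for some T > 0 there exists a differentiable x : [0,T] → ℝ with x(0) = x₀, x'(t) = b(x(t)) for all t ∈ [0,T], and x not identically equal to x₀, then there exists r > 0 such that either (b(x) > 0 for all x ∈ (x₀, x₀+r] and y ↦ 1/b(y) is Lebesgue integrable on (x₀, x₀+r)) or (b(x) < 0 for all x ∈ [x₀−r, x₀) and y ↦ 1/b(y) is Lebesgue integrable on (x₀−r, x₀)). -/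
open Set MeasureTheory

open intervalIntegral

set_option maxHeartbeats 2000000

lemma osgood_aux_pos (b : ℝ → ℝ) (hb : Continuous b) (x₀ : ℝ)
    (ρ : ℝ) (hρ : 0 < ρ) (hiso : ∀ y : ℝ, 0 < |y - x₀| → |y - x₀| ≤ ρ → b y ≠ 0)
    (T : ℝ) (hT : 0 < T) (x : ℝ → ℝ) (hx0 : x 0 = x₀)
    (hsol : ∀ t ∈ Icc (0:ℝ) T, HasDerivWithinAt x (b (x t)) (Icc 0 T) t)
    (t₁ : ℝ) (ht₁ : t₁ ∈ Icc (0:ℝ) T) (hgt : x₀ < x t₁) :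
    ∃ r > (0:ℝ), (∀ y ∈ Ioc x₀ (x₀ + r), 0 < b y) ∧
      IntegrableOn (fun y => 1 / b y) (Ioo x₀ (x₀ + r)) := by
  have hxc : ContinuousOn x (Icc 0 T) := fun t ht => (hsol t ht).continuousWithinAt
  -- choose r
  set r : ℝ := min ρ (x t₁ - x₀) with hr_def
  have hr : 0 < r := lt_min hρ (by linarith)
  have hrρ : r ≤ ρ := min_le_left _ _
  have hrx : x₀ + r ≤ x t₁ := by
    have := min_le_right ρ (x t₁ - x₀); linarith
  -- b does not vanish on (x₀, x₀+ρ]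
  have hbne : ∀ y ∈ Ioc x₀ (x₀ + ρ), b y ≠ 0 := by
    intro y hy
    refine hiso y ?_ ?_
    · rw [abs_pos]; linarith [hy.1]
    · rw [abs_of_pos (by linarith [hy.1])]; linarith [hy.2]
  -- b has constant sign on (x₀, x₀+ρ]
  have hsign : (∀ y ∈ Ioc x₀ (x₀ + ρ), 0 < b y) ∨ (∀ y ∈ Ioc x₀ (x₀ + ρ), b y < 0) := by
    by_contra h
    push_neg at h
    obtain ⟨⟨y₁, hy₁, hy₁'⟩, ⟨y₂, hy₂, hy₂'⟩⟩ := h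
    have hbneg : b y₁ < 0 := lt_of_le_of_ne hy₁' (hbne y₁ hy₁)
    have hbpos : 0 < b y₂ := lt_of_le_of_ne hy₂' (Ne.symm (hbne y₂ hy₂))
    have hsub : uIcc y₁ y₂ ⊆ Ioc x₀ (x₀ + ρ) :=
      (Set.ordConnected_Ioc).uIcc_subset hy₁ hy₂
    have : (0:ℝ) ∈ uIcc (b y₁) (b y₂) := by
      rw [Set.mem_uIcc]; left; exact ⟨hbneg.le, hbpos.le⟩
    obtain ⟨z, hz, hz0⟩ := intermediate_value_uIcc (hb.continuousOn (s := uIcc y₁ y₂)) this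
    exact hbne z (hsub hz) hz0
  -- the last time before t₁ at which x equals x₀
  have h0t₁ : (0:ℝ) ≤ t₁ := ht₁.1
  set S : Set ℝ := {t ∈ Icc 0 t₁ | x t = x₀} with hS_def
  have hS_ne : S.Nonempty := ⟨0, ⟨le_refl _, h0t₁⟩, hx0⟩
  have hIccT : Icc (0:ℝ) t₁ ⊆ Icc 0 T := Icc_subset_Icc le_rfl ht₁.2
  have hS_closed : IsClosed S :=
    ContinuousOn.preimage_isClosed_of_isClosed (hxc.mono hIccT) isClosed_Icc
      isClosed_singleton
  have hS_cpt : IsCompact S :=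
    isCompact_Icc.of_isClosed_subset hS_closed (fun t ht => ht.1)
  set τ : ℝ := sSup S with hτ_def
  have hτS : τ ∈ S := hS_cpt.sSup_mem hS_ne
  have hτ0 : 0 ≤ τ := hτS.1.1
  have hτt₁le : τ ≤ t₁ := hτS.1.2
  have hxτ : x τ = x₀ := hτS.2
  have hτt₁ : τ < t₁ := lt_of_le_of_ne hτt₁le (by intro h; rw [h] at hxτ; linarith)
  have hafter : ∀ t, τ < t → t ≤ t₁ → x t ≠ x₀ := by
    intro t ht htt₁ hxt
    have : t ∈ S := ⟨⟨hτ0.trans ht.le, htt₁⟩, hxt⟩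
    exact absurd (le_csSup hS_cpt.bddAbove this) (not_le.mpr ht)
  have hx_gt : ∀ t, τ < t → t ≤ t₁ → x₀ < x t := by
    intro t ht htt₁
    by_contra hle
    push_neg at hle
    have hlt : x t < x₀ := lt_of_le_of_ne hle (hafter t ht htt₁)
    obtain ⟨u, hu, hxu⟩ := intermediate_value_Icc htt₁
      (hxc.mono (Icc_subset_Icc (hτ0.trans ht.le) ht₁.2)) ⟨hlt.le, hgt.le⟩
    exact hafter u (ht.trans_le hu.1) hu.2 hxu
  -- the first time after τ at which x equals x₀ + r
  set S2 : Set ℝ := {t ∈ Icc τ t₁ | x t = x₀ + r} with hS2_def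
  have hS2_ne : S2.Nonempty := by
    obtain ⟨u, hu, hxu⟩ := intermediate_value_Icc hτt₁le
      (hxc.mono (Icc_subset_Icc hτ0 ht₁.2)) (by rw [hxτ]; exact ⟨by linarith, hrx⟩)
    exact ⟨u, hu, hxu⟩
  have hS2_closed : IsClosed S2 :=
    ContinuousOn.preimage_isClosed_of_isClosed
      (hxc.mono (Icc_subset_Icc hτ0 ht₁.2)) isClosed_Icc isClosed_singleton
  have hS2_cpt : IsCompact S2 :=
    isCompact_Icc.of_isClosed_subset hS2_closed (fun t ht => ht.1)
  set s : ℝ := sInf S2 with hs_def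
  have hsS2 : s ∈ S2 := hS2_cpt.sInf_mem hS2_ne
  have hτs : τ ≤ s := hsS2.1.1
  have hst₁ : s ≤ t₁ := hsS2.1.2
  have hxs : x s = x₀ + r := hsS2.2
  have hτs' : τ < s := lt_of_le_of_ne hτs (by intro h; rw [← h, hxτ] at hxs; linarith)
  have hsT : s ≤ T := hst₁.trans ht₁.2
  have hx_lt : ∀ t, τ ≤ t → t < s → x t < x₀ + r := by
    intro t hτt hts
    rcases eq_or_lt_of_le hτt with rfl | hτt'
    · rw [hxτ]; linarith
    by_contra hge
    push_neg at hge
    obtain ⟨u, hu, hxu⟩ := intermediate_value_Icc hτt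
      (hxc.mono (Icc_subset_Icc hτ0 ((hts.le.trans hst₁).trans ht₁.2)))
      (by rw [hxτ]; exact ⟨by linarith, hge⟩)
    have : s ≤ u := csInf_le hS2_cpt.bddBelow
      ⟨⟨hu.1, hu.2.trans (hts.le.trans hst₁)⟩, hxu⟩
    linarith [hu.2]
  have hmem : ∀ t, τ < t → t < s → x t ∈ Ioo x₀ (x₀ + r) := fun t h1 h2 =>
    ⟨hx_gt t h1 (h2.le.trans hst₁), hx_lt t h1.le h2⟩
  -- derivative at interior points
  have hderiv : ∀ t, 0 < t → t < T → HasDerivAt x (b (x t)) t := by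
    intro t h1 h2
    exact (hsol t ⟨h1.le, h2.le⟩).hasDerivAt (Icc_mem_nhds h1 h2)
  -- rule out the negative sign
  rcases hsign with hpos | hneg
  swap
  · exfalso
    have hanti : StrictAntiOn x (Icc τ s) := by
      refine strictAntiOn_of_deriv_neg (convex_Icc τ s)
        (hxc.mono (Icc_subset_Icc hτ0 hsT)) ?_
      intro t ht
      rw [interior_Icc] at ht
      have hd := hderiv t (lt_of_le_of_lt hτ0 ht.1) (lt_of_lt_of_le ht.2 hsT)
      rw [hd.deriv]
      have hm := hmem t ht.1 ht.2
      exact hneg (x t) ⟨hm.1, by linarith [hm.2]⟩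
    have := hanti (left_mem_Icc.mpr hτs) (right_mem_Icc.mpr hτs) hτs'
    rw [hxτ, hxs] at this; linarith
  -- now b > 0 on (x₀, x₀ + ρ]
  refine ⟨r, hr, fun y hy => hpos y ⟨hy.1, hy.2.trans (by linarith)⟩, ?_⟩
  -- the approximating sequence
  set a : ℕ → ℝ := fun n => x₀ + r / (n + 2) with ha_def
  have ha_mem : ∀ n : ℕ, a n ∈ Ioo x₀ (x₀ + r) := by
    intro n
    constructor
    · have : (0:ℝ) < r / (n + 2) := by positivity
      simp only [ha_def]; linarith
    · have h2 : (1:ℝ) < (n:ℝ) + 2 := by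
        have : (0:ℝ) ≤ (n:ℝ) := Nat.cast_nonneg n
        linarith
      have : r / ((n:ℝ) + 2) < r := by
        rw [div_lt_iff₀ (by positivity)]; nlinarith
      simp only [ha_def]; linarith
  have ha_tendsto : Filter.Tendsto a Filter.atTop (nhds x₀) := by
    have h1 : Filter.Tendsto (fun n : ℕ => r / (n + 2)) Filter.atTop (nhds 0) := by
      apply Filter.Tendsto.div_atTop (tendsto_const_nhds)
      exact Filter.tendsto_atTop_add_const_right _ 2 tendsto_natCast_atTop_atTop
    have := h1.const_add x₀
    simpa using this
  -- positivity of b on the relevant closed intervals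
  have hbpos' : ∀ n : ℕ, ∀ y ∈ Icc (a n) (x₀ + r), 0 < b y := by
    intro n y hy
    exact hpos y ⟨lt_of_lt_of_le (ha_mem n).1 hy.1, hy.2.trans (by linarith)⟩
  have hcont_inv : ∀ n : ℕ, ContinuousOn (fun y => 1 / b y) (Icc (a n) (x₀ + r)) := by
    intro n
    exact continuousOn_const.div hb.continuousOn (fun y hy => (hbpos' n y hy).ne')
  have hfi : ∀ n : ℕ, IntegrableOn (fun y => 1 / b y) (Ioc (a n) (x₀ + r)) := by
    intro n
    exact ((hcont_inv n).integrableOn_Icc).mono_set Ioc_subset_Icc_self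
  -- the key bound via change of variables
  have hbound : ∀ n : ℕ, (∫ y in Ioc (a n) (x₀ + r), ‖1 / b y‖) ≤ s - τ := by
    intro n
    -- the last time in [τ, s] at which x equals a n
    set S3 : Set ℝ := {t ∈ Icc τ s | x t = a n} with hS3_def
    have hS3_ne : S3.Nonempty := by
      obtain ⟨u, hu, hxu⟩ := intermediate_value_Icc hτs
        (hxc.mono (Icc_subset_Icc hτ0 hsT))
        (by rw [hxτ, hxs]; exact ⟨(ha_mem n).1.le, (ha_mem n).2.le⟩)
      exact ⟨u, hu, hxu⟩
    have hS3_closed : IsClosed S3 :=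
      ContinuousOn.preimage_isClosed_of_isClosed
        (hxc.mono (Icc_subset_Icc hτ0 hsT)) isClosed_Icc isClosed_singleton
    have hS3_cpt : IsCompact S3 :=
      isCompact_Icc.of_isClosed_subset hS3_closed (fun t ht => ht.1)
    set tn : ℝ := sSup S3 with htn_def
    have htnS3 : tn ∈ S3 := hS3_cpt.sSup_mem hS3_ne
    have hτtn : τ ≤ tn := htnS3.1.1
    have htns : tn ≤ s := htnS3.1.2
    have hxtn : x tn = a n := htnS3.2
    have htns' : tn < s := lt_of_le_of_ne htns (by
      intro h; rw [h, hxs] at hxtn; exact absurd hxtn.symm (ne_of_lt (ha_mem n).2))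
    have h0tn : 0 ≤ tn := hτ0.trans hτtn
    -- x maps [tn, s] into [a n, x₀ + r]
    have himg : ∀ t ∈ Icc tn s, x t ∈ Icc (a n) (x₀ + r) := by
      intro t ht
      constructor
      · rcases eq_or_lt_of_le ht.1 with rfl | htn'
        · rw [hxtn]
        by_contra hlt
        push_neg at hlt
        obtain ⟨u, hu, hxu⟩ := intermediate_value_Icc ht.2
          (hxc.mono (Icc_subset_Icc (h0tn.trans ht.1) hsT))
          (by rw [hxs]; exact ⟨hlt.le, (ha_mem n).2.le⟩)
        have : u ≤ tn := le_csSup hS3_cpt.bddAbove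
          ⟨⟨hτtn.trans (ht.1.trans hu.1), hu.2⟩, hxu⟩
        linarith [hu.1]
      · rcases eq_or_lt_of_le ht.2 with rfl | hts'
        · rw [hxs]
        · exact (hx_lt t (hτtn.trans ht.1) hts').le
    have hbne3 : ∀ t ∈ Icc tn s, b (x t) ≠ 0 := fun t ht =>
      (hbpos' n (x t) (himg t ht)).ne'
    -- change of variables
    have hsub : Icc tn s ⊆ Icc 0 T := Icc_subset_Icc h0tn hsT
    have huIcc : uIcc tn s = Icc tn s := uIcc_of_le htns
    have hcd : ∀ t ∈ Ioo (min tn s) (max tn s),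
        HasDerivWithinAt x ((fun t => b (x t)) t) (Ioi t) t := by
      intro t ht
      rw [min_eq_left htns, max_eq_right htns] at ht
      exact (hderiv t (h0tn.trans_lt ht.1) (ht.2.trans_le hsT)).hasDerivWithinAt
    have hgc : ContinuousOn (fun y => 1 / b y) (x '' uIcc tn s) := by
      refine (hcont_inv n).mono ?_
      rintro y ⟨t, ht, rfl⟩
      rw [huIcc] at ht
      exact himg t ht
    have hchg := integral_comp_smul_deriv'' (f := x) (f' := fun t => b (x t))
      (g := fun y => 1 / b y) (a := tn) (b := s)
      (by rw [huIcc]; exact hxc.mono hsub) hcd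
      (by rw [huIcc]; exact hb.comp_continuousOn (hxc.mono hsub)) hgc
    have hval : (∫ u in (a n)..(x₀ + r), 1 / b u) = s - tn := by
      rw [← hxtn, ← hxs, ← hchg]
      have heq1 : EqOn (fun t => (fun t => b (x t)) t • (((fun y => 1 / b y) ∘ x) t))
          (fun _ => (1:ℝ)) (uIcc tn s) := by
        intro t ht
        rw [huIcc] at ht
        simp only [Function.comp_apply, smul_eq_mul]
        field_simp [hbne3 t ht]
      rw [integral_congr heq1]
      simp
    have hnorm : (∫ y in Ioc (a n) (x₀ + r), ‖1 / b y‖)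
        = ∫ y in Ioc (a n) (x₀ + r), 1 / b y := by
      apply setIntegral_congr_fun measurableSet_Ioc
      intro y hy
      exact Real.norm_of_nonneg (le_of_lt (one_div_pos.mpr (hbpos' n y ⟨hy.1.le, hy.2⟩)))
    have hle : a n ≤ x₀ + r := (ha_mem n).2.le
    rw [hnorm, ← intervalIntegral.integral_of_le hle, hval]
    linarith
  have hIoc : IntegrableOn (fun y => 1 / b y) (Ioc x₀ (x₀ + r)) :=
    MeasureTheory.integrableOn_Ioc_of_intervalIntegral_norm_bounded_left hfi ha_tendsto
      (Filter.Eventually.of_forall hbound)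
  exact hIoc.mono_set Ioo_subset_Ioc_self

/-- Osgood-type criterion, necessity: if `b` is continuous, `x₀` is an isolated
zero of `b`, and the IVP `x' = b ∘ x`, `x 0 = x₀` admits a forward solution which is not
identically `x₀`, then on one side of `x₀` the field does not vanish and `1/b` is integrable
near `x₀`. -/
theorem integrable_reciprocal_of_nonconstant_solution
    (b : ℝ → ℝ) (hb : Continuous b) (x₀ : ℝ) (hb0 : b x₀ = 0)
    (hiso : ∃ ρ > (0 : ℝ), ∀ x : ℝ, 0 < |x - x₀| → |x - x₀| ≤ ρ → b x ≠ 0)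
    (T : ℝ) (hT : 0 < T) (x : ℝ → ℝ) (hx0 : x 0 = x₀)
    (hsol : ∀ t ∈ Icc (0:ℝ) T, HasDerivWithinAt x (b (x t)) (Icc 0 T) t)
    (hne : ∃ t ∈ Icc (0:ℝ) T, x t ≠ x₀) :
    ∃ r > (0 : ℝ),
      ((∀ x ∈ Ioc x₀ (x₀ + r), 0 < b x) ∧
        IntegrableOn (fun y => 1 / b y) (Ioo x₀ (x₀ + r))) ∨
      ((∀ x ∈ Ico (x₀ - r) x₀, b x < 0) ∧
        IntegrableOn (fun y => 1 / b y) (Ioo (x₀ - r) x₀)) := by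
  obtain ⟨ρ, hρ, hiso⟩ := hiso
  obtain ⟨t₁, ht₁, hne₁⟩ := hne
  rcases hne₁.lt_or_gt with hlt | hgt
  · -- x t₁ < x₀ : reflect
    set b' : ℝ → ℝ := fun y => -b (-y) with hb'_def
    have hb'c : Continuous b' := (hb.comp continuous_neg).neg
    have hiso' : ∀ y : ℝ, 0 < |y - (-x₀)| → |y - (-x₀)| ≤ ρ → b' y ≠ 0 := by
      intro y h1 h2
      have he : |(-y) - x₀| = |y - (-x₀)| := by
        rw [show (-y) - x₀ = -(y - (-x₀)) by ring, abs_neg]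
      have := hiso (-y) (by rw [he]; exact h1) (by rw [he]; exact h2)
      simpa [hb'_def] using this
    have hsol' : ∀ t ∈ Icc (0:ℝ) T,
        HasDerivWithinAt (fun t => -x t) (b' (-x t)) (Icc 0 T) t := by
      intro t ht
      have := (hsol t ht).neg
      simp only [hb'_def, neg_neg]; exact this
    obtain ⟨r, hr, hpos, hint⟩ := osgood_aux_pos b' hb'c (-x₀) ρ hρ hiso' T hT
      (fun t => -x t) (by show -x 0 = -x₀; rw [hx0]) hsol' t₁ ht₁
      (by show -x₀ < -x t₁; linarith)
    refine ⟨r, hr, Or.inr ⟨?_, ?_⟩⟩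
    · intro z hz
      have hmem : -z ∈ Ioc (-x₀) (-x₀ + r) := ⟨by linarith [hz.2], by linarith [hz.1]⟩
      have := hpos (-z) hmem
      simp only [hb'_def, neg_neg] at this
      linarith
    · -- transfer integrability through negation
      have h2 : IntervalIntegrable (fun y => 1 / b' y) volume (-x₀) (-x₀ + r) :=
        (intervalIntegrable_iff_integrableOn_Ioc_of_le (by linarith)).mpr
          (hint.congr_set_ae Ioo_ae_eq_Ioc.symm)
      have h3 : IntervalIntegrable (fun y => 1 / b (-y)) volume (-x₀) (-x₀ + r) := by
        have heq : (fun y => 1 / b (-y)) = fun y => -(1 / b' y) := by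
          funext y; simp [hb'_def, div_neg]
        rw [heq]
        exact h2.neg
      have h4 : IntervalIntegrable (fun y => 1 / b y) volume x₀ (x₀ - r) := by
        apply (IntervalIntegrable.iff_comp_neg (by simp)).mpr
        have : -(x₀ - r) = -x₀ + r := by ring
        rw [this]
        exact h3
      have h5 : IntegrableOn (fun y => 1 / b y) (Ioc (x₀ - r) x₀) :=
        (intervalIntegrable_iff_integrableOn_Ioc_of_le (by linarith)).mp h4.symm
      exact h5.mono_set Ioo_subset_Ioc_self
  · obtain ⟨r, hr, hpos, hint⟩ := osgood_aux_pos b hb x₀ ρ hρ hiso T hT x hx0 hsol t₁ ht₁ hgt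
    exact ⟨r, hr, Or.inl ⟨hpos, hint⟩⟩
end

section
/- Let b : ℝ^d → ℝ^d be continuous and bounded, and let K ⊆ ℝ^d be a compact domain of class C² such that ⟨b(x), ∇b_K(x)⟩ > 0 for every x ∈ ∂K. Let y : [0,∞) → ℝ^d satisfy y(t) = y(0) + ∫₀ᵗ b(y(s)) ds for all t ≥ 0 and suppose τ_K(y) < +∞. If y_n : [0,∞) → ℝ^d are continuous functions converging to y uniformly on every compact subset of [0,∞), then τ_K(y_n) → τ_K(y) as n → ∞. -/
open MeasureTheory ProbabilityTheory Set Filter Topology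
open scoped NNReal ENNReal RealInnerProductSpace

noncomputable section

abbrev Ed (d : ℕ) := EuclideanSpace ℝ (Fin d)

/-- A solution of the ODE `ξ' = b(ξ)` on `[0,∞)` with initial value `x`. -/
def IsSol {d : ℕ} (b : Ed d → Ed d) (x : Ed d) (ξ : ℝ≥0 → Ed d) : Prop :=
  Continuous ξ ∧ ξ 0 = x ∧
    ∀ t : ℝ≥0, ξ t = x + ∫ s in (0:ℝ)..(t:ℝ), b (ξ s.toNNReal)

/-- Exit time of a path from `K`, valued in `[0,∞]`. -/
def exitTime {d : ℕ} (K : Set (Ed d)) (ξ : ℝ≥0 → Ed d) : ℝ≥0∞ :=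
  ⨅ t ∈ {t : ℝ≥0 | ξ t ∉ K}, (t : ℝ≥0∞)

/-- Minimal exit time from `K` over all solutions starting at `x`. -/
def VK {d : ℕ} (b : Ed d → Ed d) (K : Set (Ed d)) (x : Ed d) : ℝ≥0∞ :=
  ⨅ ξ ∈ {ξ : ℝ≥0 → Ed d | IsSol b x ξ}, exitTime K ξ

/-- The leaving solutions starting from `0`. -/
def LS {d : ℕ} (b : Ed d → Ed d) : Set (ℝ≥0 → Ed d) :=
  {ξ | IsSol b 0 ξ ∧ ∃ τ : ℝ≥0, 0 < τ ∧ ∀ t : ℝ≥0, 0 < t → t < τ → ξ t ≠ 0}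

def H1 {d : ℕ} (b : Ed d → Ed d) : Prop :=
  Continuous b ∧ (∃ M : ℝ, ∀ x, ‖b x‖ ≤ M) ∧
    ∀ x : Ed d, x ≠ 0 → ∃ s ∈ 𝓝 x, ∃ L : ℝ≥0, LipschitzOnWith L b s

def H2 {d : ℕ} (b : Ed d → Ed d) : Prop :=
  b 0 = 0 ∧ ∀ x : Ed d, x ≠ 0 → b x ≠ 0

def IsCompactDomain {d : ℕ} (K : Set (Ed d)) : Prop :=
  IsCompact K ∧ (interior K).Nonempty ∧ K = closure (interior K)

open Classical in
/-- Oriented (signed) distance to the boundary of `K`. -/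
def sdist {d : ℕ} (K : Set (Ed d)) (x : Ed d) : ℝ :=
  if x ∈ interior K then -(Metric.infDist x (frontier K)) else Metric.infDist x (frontier K)

def H3 {d : ℕ} (b : Ed d → Ed d) (K : Set (Ed d)) : Prop :=
  ∃ τ : ℝ≥0, 0 < τ ∧ ∀ ξ ∈ LS b, ξ τ ∈ frontier K

def H4 {d : ℕ} (b : Ed d → Ed d) (K : Set (Ed d)) : Prop :=
  (∃ U : Set (Ed d), IsOpen U ∧ frontier K ⊆ U ∧ ContDiffOn ℝ 1 (sdist K) U) ∧
    ∀ x ∈ frontier K, 0 < ⟪b x, gradient (sdist K) x⟫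

def IsC2Domain {d : ℕ} (K : Set (Ed d)) : Prop :=
  IsCompactDomain K ∧ ∃ ε₀ : ℝ, 0 < ε₀ ∧
    ContDiffOn ℝ 2 (sdist K) {x | |sdist K x| ≤ ε₀}

def IsC21Domain {d : ℕ} (K : Set (Ed d)) : Prop :=
  IsCompactDomain K ∧ ∃ ε₀ : ℝ, 0 < ε₀ ∧
    ContDiffOn ℝ 2 (sdist K) {x | |sdist K x| ≤ ε₀} ∧
    ∃ L : ℝ≥0, LipschitzOnWith L (iteratedFDeriv ℝ 2 (sdist K)) {x | |sdist K x| ≤ ε₀}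

/-- The centered Gaussian measure on `ℝ^d` with covariance `v • Id`. -/
def stdGaussian (d : ℕ) (v : ℝ) : Measure (Ed d) :=
  Measure.map (⇑(EuclideanSpace.equiv (Fin d) ℝ).symm)
    (Measure.pi fun _ : Fin d => gaussianReal 0 (Real.toNNReal v))

/-- `W` is a standard `d`-dimensional Brownian motion on `(Ω, P)`. -/
def IsBrownian {d : ℕ} {Ω : Type*} [MeasurableSpace Ω] (P : Measure Ω)
    (W : ℝ≥0 → Ω → Ed d) : Prop :=
  (∀ ω, W 0 ω = 0) ∧ (∀ ω, Continuous fun t => W t ω) ∧ (∀ t, Measurable (W t)) ∧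
    ∀ s t : ℝ≥0, s ≤ t →
      IndepFun (fun ω => W t ω - W s ω) (fun ω (u : Set.Iic s) => W (↑u) ω) P ∧
      Measure.map (fun ω => W t ω - W s ω) P = stdGaussian d ((t : ℝ) - s)

/-- `X` is a strong solution of `dX = b(X) dt + ε dW`, `X 0 = x`. -/
def IsStrongSol {d : ℕ} {Ω : Type*} [MeasurableSpace Ω] (P : Measure Ω)
    (b : Ed d → Ed d) (ε : ℝ) (x : Ed d) (W : ℝ≥0 → Ω → Ed d)
    (X : ℝ≥0 → Ω → Ed d) : Prop :=
  (∀ ω, Continuous fun t => X t ω) ∧ (∀ t, Measurable (X t)) ∧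
    ∀ᵐ ω ∂P, ∀ t : ℝ≥0,
      X t ω = x + (∫ s in (0:ℝ)..(t:ℝ), b (X s.toNNReal ω)) + ε • W t ω


lemma abs_sdist {d : ℕ} (K : Set (Ed d)) (v : Ed d) :
    |sdist K v| = Metric.infDist v (frontier K) := by
  rw [sdist]
  split_ifs with h
  · rw [abs_neg, abs_of_nonneg Metric.infDist_nonneg]
  · rw [abs_of_nonneg Metric.infDist_nonneg]

lemma not_mem_of_sdist_pos {d : ℕ} {K : Set (Ed d)} (hKc : IsClosed K) {x : Ed d}
    (h : 0 < sdist K x) : x ∉ K := by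
  intro hx
  by_cases hi : x ∈ interior K
  · rw [sdist, if_pos hi] at h
    have := Metric.infDist_nonneg (s := frontier K) (x := x)
    linarith
  · have hfr : x ∈ frontier K := by
      rw [hKc.frontier_eq]; exact ⟨hx, hi⟩
    rw [sdist, if_neg hi, Metric.infDist_zero_of_mem hfr] at h
    exact lt_irrefl 0 h

lemma sdist_eq_zero_of_frontier {d : ℕ} {K : Set (Ed d)} {x : Ed d}
    (hx : x ∈ frontier K) : sdist K x = 0 := by
  have hi : x ∉ interior K := fun h => (disjoint_interior_frontier (s := K)).ne_of_mem h hx rfl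
  rw [sdist, if_neg hi, Metric.infDist_zero_of_mem hx]

lemma exitTime_le_of_not_mem {d : ℕ} {K : Set (Ed d)} {ξ : ℝ≥0 → Ed d} {t : ℝ≥0}
    (h : ξ t ∉ K) : exitTime K ξ ≤ (t : ℝ≥0∞) := iInf₂_le t h

lemma mem_interior_of_lt_exitTime {d : ℕ}
    {b : Ed d → Ed d} (hb : Continuous b)
    {K : Set (Ed d)} (hK : IsC2Domain K)
    (htrans : ∀ x ∈ frontier K, 0 < ⟪b x, gradient (sdist K) x⟫)
    {y : ℝ≥0 → Ed d} (hy : Continuous y)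
    (hsol : ∀ t : ℝ≥0, y t = y 0 + ∫ s in (0:ℝ)..(t:ℝ), b (y s.toNNReal))
    (hexit : exitTime K y < ⊤)
    (t : ℝ≥0) (ht : (t : ℝ≥0∞) < exitTime K y) : y t ∈ interior K := by
  have hKc : IsClosed K := hK.1.1.isClosed
  have hmem : y t ∈ K := by
    by_contra h
    exact absurd (exitTime_le_of_not_mem h) (not_le.2 ht)
  by_contra hint
  have hfr : y t ∈ frontier K := by rw [hKc.frontier_eq]; exact ⟨hmem, hint⟩
  obtain ⟨ε₀, hε₀, hC2⟩ := hK.2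
  set x := y t with hx
  -- sdist is C² near x
  have hnhds : {v : Ed d | |sdist K v| ≤ ε₀} ∈ 𝓝 x := by
    refine Filter.mem_of_superset
      ((isOpen_lt (Metric.continuous_infDist_pt (frontier K)) continuous_const).mem_nhds ?_)
      (fun v hv => by rw [mem_setOf_eq, abs_sdist]; exact le_of_lt hv)
    simpa [Metric.infDist_zero_of_mem hfr] using hε₀
  have hcd : ContDiffAt ℝ 2 (sdist K) x := hC2.contDiffAt hnhds
  have hdiff : DifferentiableAt ℝ (sdist K) x := hcd.differentiableAt (by norm_num)
  have hgrad : HasGradientAt (sdist K) (gradient (sdist K) x) x := hdiff.hasGradientAt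
  have hfd : HasFDerivAt (sdist K) (InnerProductSpace.toDual ℝ _ (gradient (sdist K) x)) x :=
    hgrad.hasFDerivAt
  -- z and its derivative
  set z : ℝ → Ed d := fun r => y r.toNNReal with hz
  have hzc : Continuous z := hy.comp continuous_real_toNNReal
  have hzt : z (t : ℝ) = x := by simp [hz, Real.toNNReal_coe, hx]
  have hF : HasDerivAt (fun r : ℝ => y 0 + ∫ s in (0:ℝ)..r, b (z s)) (b (z (t:ℝ))) (t:ℝ) :=
    (((hb.comp hzc).integral_hasStrictDerivAt 0 (t:ℝ)).hasDerivAt).const_add (y 0)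
  have hzF : ∀ r : ℝ, 0 ≤ r → z r = y 0 + ∫ s in (0:ℝ)..r, b (z s) := by
    intro r hr
    have := hsol r.toNNReal
    rwa [Real.coe_toNNReal r hr] at this
  have hzd : HasDerivWithinAt z (b (z (t:ℝ))) (Ici (t:ℝ)) (t:ℝ) :=
    hF.hasDerivWithinAt.congr (fun r hr => hzF r (le_trans t.coe_nonneg hr))
      (hzF (t:ℝ) t.coe_nonneg)
  -- derivative of sdist ∘ z
  have hgd : HasDerivWithinAt (fun r => sdist K (z r))
      (⟪gradient (sdist K) x, b x⟫) (Ici (t:ℝ)) (t:ℝ) := by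
    have := (hzt ▸ hfd).comp_hasDerivWithinAt (t:ℝ) hzd
    simpa [hzt, InnerProductSpace.toDual_apply_apply, Function.comp_def] using this
  have hcpos : 0 < ⟪gradient (sdist K) x, b x⟫ := by
    rw [real_inner_comm]; exact htrans x hfr
  -- slope argument
  rw [hasDerivWithinAt_iff_tendsto_slope, Set.Ici_sdiff_left] at hgd
  have hslope : ∀ᶠ s in 𝓝[>] (t:ℝ), 0 < slope (fun r => sdist K (z r)) (t:ℝ) s :=
    hgd.eventually (eventually_gt_nhds hcpos)
  obtain ⟨c, hc1, hc2⟩ := exists_between ht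
  have hcne : c ≠ ⊤ := (hc2.trans hexit).ne
  set s₀ : ℝ≥0 := c.toNNReal with hs₀
  have hcs₀ : (s₀ : ℝ≥0∞) = c := ENNReal.coe_toNNReal hcne
  have hts₀ : (t : ℝ) < (s₀ : ℝ) := by
    have : (t : ℝ≥0∞) < (s₀ : ℝ≥0∞) := by rw [hcs₀]; exact hc1
    exact_mod_cast this
  have hbound : ∀ᶠ s in 𝓝[>] (t:ℝ), s < (s₀ : ℝ) :=
    eventually_nhdsWithin_of_eventually_nhds (eventually_lt_nhds hts₀)
  obtain ⟨s, ⟨hs0, hss₀⟩, hst⟩ := ((hslope.and hbound).and eventually_mem_nhdsWithin).exists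
  -- sdist K (z s) > 0
  have hgt0 : sdist K (z (t:ℝ)) = 0 := by rw [hzt]; exact sdist_eq_zero_of_frontier hfr
  have hzs : 0 < sdist K (z s) := by
    rw [slope_def_field, hgt0, sub_zero] at hs0
    rcases div_pos_iff.1 hs0 with ⟨h, _⟩ | ⟨_, h⟩
    · exact h
    · exact absurd (sub_pos.2 (mem_Ioi.1 hst)) (not_lt.2 h.le)
  have hnot : y s.toNNReal ∉ K := not_mem_of_sdist_pos hKc hzs
  have hle : exitTime K y ≤ (s.toNNReal : ℝ≥0∞) := exitTime_le_of_not_mem hnot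
  have hlt : (s.toNNReal : ℝ≥0∞) < exitTime K y := by
    have h1 : s.toNNReal < s₀ := by
      rw [← NNReal.coe_lt_coe, Real.coe_toNNReal s (t.coe_nonneg.trans (mem_Ioi.1 hst).le)]
      exact hss₀
    calc (s.toNNReal : ℝ≥0∞) < (s₀ : ℝ≥0∞) := ENNReal.coe_lt_coe.2 h1
    _ = c := hcs₀
    _ < exitTime K y := hc2
  exact absurd hle (not_le.2 hlt)

/-- for a `C²` compact domain `K` transversal to the bounded continuous field
`b`, the exit time from `K` is continuous along sequences of continuous paths converging,
uniformly on compact subsets of `[0,∞)`, to a solution of the ODE with finite exit time. -/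
theorem exitTime_tendsto_of_tendstoUniformlyOn {d : ℕ} (hd : 1 ≤ d)
    (b : Ed d → Ed d) (hb : Continuous b) (hbdd : ∃ M : ℝ, ∀ x, ‖b x‖ ≤ M)
    (K : Set (Ed d)) (hK : IsC2Domain K)
    (htrans : ∀ x ∈ frontier K, 0 < ⟪b x, gradient (sdist K) x⟫)
    (y : ℝ≥0 → Ed d) (hy : Continuous y)
    (hsol : ∀ t : ℝ≥0, y t = y 0 + ∫ s in (0:ℝ)..(t:ℝ), b (y s.toNNReal))
    (hexit : exitTime K y < ⊤)
    (yn : ℕ → ℝ≥0 → Ed d) (hyn : ∀ n, Continuous (yn n))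
    (hconv : ∀ C : Set ℝ≥0, IsCompact C →
      TendstoUniformlyOn (fun n t => yn n t) y atTop C) :
    Tendsto (fun n => exitTime K (yn n)) atTop (𝓝 (exitTime K y)) := by
  have hKc : IsClosed K := hK.1.1.isClosed
  refine tendsto_order.2 ⟨?_, ?_⟩
  · -- lower bound
    intro a ha
    obtain ⟨c, hac, hce⟩ := exists_between ha
    have hcne : c ≠ ⊤ := (hce.trans hexit).ne
    set r : ℝ≥0 := c.toNNReal with hr
    have hcr : (r : ℝ≥0∞) = c := ENNReal.coe_toNNReal hcne
    have himg : y '' Icc 0 r ⊆ interior K := by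
      rintro _ ⟨u, hu, rfl⟩
      refine mem_interior_of_lt_exitTime hb hK htrans hy hsol hexit u ?_
      calc (u : ℝ≥0∞) ≤ (r : ℝ≥0∞) := ENNReal.coe_le_coe.2 hu.2
      _ = c := hcr
      _ < exitTime K y := hce
    obtain ⟨δ, hδ, hthick⟩ :=
      (isCompact_Icc.image hy).exists_thickening_subset_open isOpen_interior himg
    have hev := (Metric.tendstoUniformlyOn_iff.1 (hconv (Icc 0 r) isCompact_Icc)) δ hδ
    filter_upwards [hev] with n hn
    have hin : ∀ u : ℝ≥0, u ≤ r → yn n u ∈ K := by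
      intro u hu
      refine interior_subset (hthick ?_)
      rw [Metric.mem_thickening_iff]
      exact ⟨y u, mem_image_of_mem y ⟨zero_le, hu⟩, by rw [dist_comm]; exact hn u ⟨zero_le, hu⟩⟩
    have : c ≤ exitTime K (yn n) := by
      refine le_iInf₂ fun u hu => ?_
      rcases le_or_gt u r with h | h
      · exact absurd (hin u h) hu
      · rw [← hcr]; exact le_of_lt (ENNReal.coe_lt_coe.2 h)
    exact lt_of_lt_of_le hac this
  · -- upper bound
    intro a ha
    have : ∃ u : ℝ≥0, y u ∉ K ∧ (u : ℝ≥0∞) < a := by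
      rw [exitTime] at ha
      obtain ⟨u, hu⟩ := iInf_lt_iff.1 ha
      obtain ⟨hu1, hu2⟩ := iInf_lt_iff.1 hu
      exact ⟨u, hu1, hu2⟩
    obtain ⟨u, huK, hua⟩ := this
    have htend : Tendsto (fun n => yn n u) atTop (𝓝 (y u)) :=
      (hconv {u} isCompact_singleton).tendsto_at rfl
    have hev : ∀ᶠ n in atTop, yn n u ∉ K :=
      htend (hKc.isOpen_compl.mem_nhds huK)
    filter_upwards [hev] with n hn
    exact lt_of_le_of_lt (exitTime_le_of_not_mem hn) hua

end
end

section
/- Let b : ℝ^d → ℝ^d be bounded and continuous, let K ⊆ ℝ^d be compact, let ε > 0, let W be a standard d-dimensional Brownian motion on a probability space (Ω,F,P), let x ∈ ℝ^d, and let X be a strong solution of dX = b(X)dt + ε dW with X(0) = x. Then the exit time θ^ε := inf{t ≥ 0 : X_t ∉ K} is P-almost surely finite. -/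
open MeasureTheory ProbabilityTheory Set Filter Topology
open scoped NNReal ENNReal RealInnerProductSpace

noncomputable section

lemma stdGaussian_pos {d : ℕ} (hd : 1 ≤ d) (C : ℝ) : 0 < stdGaussian d 1 {y | C < ‖y‖} := by
  have hmeas : MeasurableSet {y : Ed d | C < ‖y‖} :=
    measurableSet_lt measurable_const continuous_norm.measurable
  rw [_root_.stdGaussian, Measure.map_apply
      (EuclideanSpace.equiv (Fin d) ℝ).symm.continuous.measurable hmeas]
  set i₀ : Fin d := ⟨0, hd⟩
  have hsub : (Function.eval i₀ ⁻¹' Ioi C : Set (Fin d → ℝ)) ⊆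
      (⇑(EuclideanSpace.equiv (Fin d) ℝ).symm) ⁻¹' {y | C < ‖y‖} := by
    intro f hf
    simp only [mem_preimage, mem_setOf_eq]
    have h1 : f i₀ ≤ |((EuclideanSpace.equiv (Fin d) ℝ).symm f) i₀| := le_abs_self _
    have h2 : |((EuclideanSpace.equiv (Fin d) ℝ).symm f) i₀| ≤
        ‖(EuclideanSpace.equiv (Fin d) ℝ).symm f‖ := by
      rw [EuclideanSpace.norm_eq]
      rw [← Real.sqrt_sq_eq_abs]
      apply Real.sqrt_le_sqrt
      have := Finset.single_le_sum
        (f := fun i => ‖((EuclideanSpace.equiv (Fin d) ℝ).symm f) i‖ ^ 2)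
        (fun i _ => by positivity) (Finset.mem_univ i₀)
      simpa [Real.norm_eq_abs, sq_abs] using this
    exact lt_of_lt_of_le (lt_of_lt_of_le hf h1) h2
  refine lt_of_lt_of_le ?_ (measure_mono hsub)
  classical
  rw [Set.eval_preimage, Measure.pi_pi]
  refine pos_iff_ne_zero.mpr (Finset.prod_ne_zero_iff.mpr fun j _ => ?_)
  by_cases hj : j = i₀
  · subst hj; rw [Function.update_self]
    intro h0
    have := (gaussianReal_absolutelyContinuous' 0 (v := Real.toNNReal 1) (by simp)) h0
    rw [Real.volume_Ioi] at this
    exact ENNReal.top_ne_zero this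
  · rw [Function.update_of_ne hj]
    simp


set_option maxHeartbeats 1000000 in
/-- the exit time of the (nondegenerate) perturbed SDE from a compact set
is almost surely finite. -/
theorem exitTime_ae_finite {d : ℕ} (hd : 1 ≤ d)
    {Ω : Type*} [MeasurableSpace Ω] (P : Measure Ω) [IsProbabilityMeasure P]
    (b : Ed d → Ed d) (hb : Continuous b) (hbdd : ∃ M : ℝ, ∀ x, ‖b x‖ ≤ M)
    (K : Set (Ed d)) (hK : IsCompact K)
    (ε : ℝ) (hε : 0 < ε)
    (W : ℝ≥0 → Ω → Ed d) (hW : IsBrownian P W)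
    (x : Ed d) (X : ℝ≥0 → Ω → Ed d) (hX : IsStrongSol P b ε x W X) :
    ∀ᵐ ω ∂P, exitTime K (fun t => X t ω) < ⊤ := by
  obtain ⟨M, hM⟩ := hbdd
  have hM0 : 0 ≤ M := le_trans (norm_nonneg _) (hM 0)
  obtain ⟨R, hR0, hKR⟩ : ∃ R : ℝ, 0 ≤ R ∧ K ⊆ Metric.closedBall 0 R := by
    obtain ⟨R, hR⟩ := hK.isBounded.subset_closedBall 0
    exact ⟨max R 0, le_max_right _ _,
      hR.trans (Metric.closedBall_subset_closedBall (le_max_left _ _))⟩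
  set C : ℝ := (M + 2 * R + 1) / ε with hCdef
  set S : Set (Ed d) := {y | C < ‖y‖} with hSdef
  have hSmeas : MeasurableSet S := measurableSet_lt measurable_const continuous_norm.measurable
  set A : ℕ → Set Ω := fun n => (fun ω => W ((n : ℝ≥0) + 1) ω - W (n : ℝ≥0) ω) ⁻¹' S with hAdef
  have hWm : ∀ n : ℕ, Measurable fun ω => W ((n : ℝ≥0) + 1) ω - W (n : ℝ≥0) ω :=
    fun n => (hW.2.2.1 _).sub (hW.2.2.1 _)
  have hAmeas : ∀ n, MeasurableSet (A n) := fun n => (hWm n) hSmeas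
  set p : ℝ≥0∞ := stdGaussian d 1 S with hpdef
  have hlawn : ∀ n : ℕ,
      Measure.map (fun ω => W ((n : ℝ≥0) + 1) ω - W (n : ℝ≥0) ω) P = stdGaussian d 1 := by
    intro n
    have := (hW.2.2.2 (n : ℝ≥0) ((n : ℝ≥0) + 1) le_self_add).2
    have hc : ((((n : ℝ≥0) + 1 : ℝ≥0)) : ℝ) - ((n : ℝ≥0) : ℝ) = 1 := by push_cast; ring
    rwa [hc] at this
  have hPA : ∀ n : ℕ, P (A n) = p := by
    intro n
    rw [hAdef]
    rw [← Measure.map_apply (hWm n) hSmeas, hlawn n]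
  have hp : 0 < p := stdGaussian_pos hd C
  -- independence-based induction
  have key : ∀ N : ℕ, P (⋂ n ∈ Finset.range N, (A n)ᶜ) = (1 - p) ^ N := by
    intro N
    induction N with
    | zero => simp
    | succ N ih =>
      rw [Finset.range_add_one]
      rw [Finset.set_biInter_insert]
      -- express the tail as a preimage of the path up to time N
      set proj : ℝ≥0 → Set.Iic (N : ℝ≥0) := fun t => ⟨min t N, Set.mem_Iic.mpr (min_le_right _ _)⟩ with hproj
      set Tn : ℕ → Set (Set.Iic (N : ℝ≥0) → Ed d) := fun n =>
        {f | C < ‖f (proj ((n : ℝ≥0) + 1)) - f (proj (n : ℝ≥0))‖}ᶜ with hTn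
      set T : Set (Set.Iic (N : ℝ≥0) → Ed d) := ⋂ n ∈ Finset.range N, Tn n with hTdef
      have hTmeas : MeasurableSet T := by
        refine MeasurableSet.biInter (Finset.range N).countable_toSet fun n _ => ?_
        have h : Measurable fun f : Set.Iic (N : ℝ≥0) → Ed d =>
            ‖f (proj ((n : ℝ≥0) + 1)) - f (proj (n : ℝ≥0))‖ :=
          ((measurable_pi_apply (proj ((n : ℝ≥0) + 1))).sub
            (measurable_pi_apply (proj (n : ℝ≥0)))).norm
        exact (measurableSet_lt measurable_const h).compl
      have hBT : (⋂ n ∈ Finset.range N, (A n)ᶜ) =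
          (fun ω (u : Set.Iic (N : ℝ≥0)) => W (↑u) ω) ⁻¹' T := by
        rw [hTdef, Set.preimage_iInter₂]
        refine Set.iInter₂_congr fun n hn => ?_
        have hn' : n < N := Finset.mem_range.mp hn
        have h1 : min ((n : ℝ≥0) + 1) (N : ℝ≥0) = (n : ℝ≥0) + 1 := by
          refine min_eq_left ?_
          have : ((n : ℕ) + 1 : ℕ) ≤ N := hn'
          exact_mod_cast (by exact_mod_cast this : ((n + 1 : ℕ) : ℝ≥0) ≤ (N : ℝ≥0))
        have h2 : min ((n : ℝ≥0)) (N : ℝ≥0) = (n : ℝ≥0) := by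
          refine min_eq_left ?_
          exact_mod_cast hn'.le
        ext ω
        simp only [hAdef, hTn, hproj, mem_preimage, mem_compl_iff, mem_setOf_eq, hSdef]
        rw [h1, h2]
      rw [hBT]
      have hindep := (hW.2.2.2 (N : ℝ≥0) ((N : ℝ≥0) + 1) le_self_add).1
      have hAc : (A N)ᶜ =
          (fun ω => W ((N : ℝ≥0) + 1) ω - W (N : ℝ≥0) ω) ⁻¹' Sᶜ := by
        rw [hAdef, Set.preimage_compl]
      rw [hAc]
      rw [hindep.measure_inter_preimage_eq_mul _ _ hSmeas.compl hTmeas]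
      rw [← hAc, ← hBT, ih]
      have h1p : P ((A N)ᶜ) = 1 - p := by
        rw [prob_compl_eq_one_sub (hAmeas N), hPA N]
      rw [h1p, pow_succ]
      ring
  -- conclude: a.s. some A n occurs
  have hzero : P (⋂ n : ℕ, (A n)ᶜ) = 0 := by
    have hle : ∀ N : ℕ, P (⋂ n : ℕ, (A n)ᶜ) ≤ (1 - p) ^ N := by
      intro N
      rw [← key N]
      exact measure_mono (Set.iInter_mono fun n => Set.subset_iInter fun _ => le_rfl)
    have hlt : (1 : ℝ≥0∞) - p < 1 := ENNReal.sub_lt_self ENNReal.one_ne_top one_ne_zero hp.ne'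
    have htend := ENNReal.tendsto_pow_atTop_nhds_zero_of_lt_one hlt
    simpa using ge_of_tendsto' htend hle
  have hae : ∀ᵐ ω ∂P, ω ∈ ⋃ n : ℕ, A n := by
    rw [MeasureTheory.ae_iff]
    have : {ω | ¬ ω ∈ ⋃ n : ℕ, A n} = ⋂ n : ℕ, (A n)ᶜ := by
      ext ω; simp
    rw [this]; exact hzero
  filter_upwards [hae, hX.2.2] with ω hmem hid
  obtain ⟨n, hn⟩ := Set.mem_iUnion.mp hmem
  have hΔ : C < ‖W ((n : ℝ≥0) + 1) ω - W (n : ℝ≥0) ω‖ := hn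
  -- the path jumps by more than 2R between times n and n+1
  have hcont : Continuous fun s : ℝ => b (X s.toNNReal ω) :=
    hb.comp ((hX.1 ω).comp continuous_real_toNNReal)
  have hintg : ∀ a c : ℝ, IntervalIntegrable (fun s => b (X s.toNNReal ω)) volume a c :=
    fun a c => hcont.intervalIntegrable a c
  set I : Ed d := ∫ s in ((n : ℕ) : ℝ)..(((n : ℕ) : ℝ) + 1), b (X s.toNNReal ω) with hIdef
  have hXdiff : X ((n : ℝ≥0) + 1) ω - X (n : ℝ≥0) ω
      = I + ε • (W ((n : ℝ≥0) + 1) ω - W (n : ℝ≥0) ω) := by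
    rw [hid ((n : ℝ≥0) + 1), hid (n : ℝ≥0)]
    have hc1 : ((((n : ℝ≥0) + 1 : ℝ≥0)) : ℝ) = ((n : ℕ) : ℝ) + 1 := by push_cast; ring
    have hc2 : (((n : ℝ≥0)) : ℝ) = ((n : ℕ) : ℝ) := by push_cast; ring
    rw [hc1, hc2]
    have hsplit : (∫ s in (0:ℝ)..(((n : ℕ) : ℝ) + 1), b (X s.toNNReal ω))
        = (∫ s in (0:ℝ)..((n : ℕ) : ℝ), b (X s.toNNReal ω)) + I :=
      (intervalIntegral.integral_add_adjacent_intervals (hintg _ _) (hintg _ _)).symm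
    rw [hsplit, smul_sub]
    abel
  have hInorm : ‖I‖ ≤ M := by
    have := intervalIntegral.norm_integral_le_of_norm_le_const
      (a := ((n : ℕ) : ℝ)) (b := ((n : ℕ) : ℝ) + 1) (C := M)
      (f := fun s => b (X s.toNNReal ω)) (fun s _ => hM _)
    simpa using this
  have hεC : ε * C = M + 2 * R + 1 := by
    rw [hCdef]; field_simp
  have hbig : 2 * R < ‖X ((n : ℝ≥0) + 1) ω - X (n : ℝ≥0) ω‖ := by
    have h1 : ‖ε • (W ((n : ℝ≥0) + 1) ω - W (n : ℝ≥0) ω)‖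
        = ε * ‖W ((n : ℝ≥0) + 1) ω - W (n : ℝ≥0) ω‖ := by
      rw [norm_smul, Real.norm_eq_abs, abs_of_pos hε]
    have h2 : ε * C < ε * ‖W ((n : ℝ≥0) + 1) ω - W (n : ℝ≥0) ω‖ :=
      (mul_lt_mul_iff_right₀ hε).mpr hΔ
    have h3 : ‖ε • (W ((n : ℝ≥0) + 1) ω - W (n : ℝ≥0) ω)‖
        ≤ ‖X ((n : ℝ≥0) + 1) ω - X (n : ℝ≥0) ω‖ + ‖I‖ := by
      rw [hXdiff]
      have := norm_sub_le (I + ε • (W ((n : ℝ≥0) + 1) ω - W (n : ℝ≥0) ω)) I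
      simpa [add_sub_cancel_left] using this
    rw [h1] at h3
    rw [hεC] at h2
    linarith
  have hout : X ((n : ℝ≥0) + 1) ω ∉ K ∨ X (n : ℝ≥0) ω ∉ K := by
    by_contra h
    push_neg at h
    have h1 : ‖X ((n : ℝ≥0) + 1) ω‖ ≤ R := by
      have := hKR h.1; rwa [Metric.mem_closedBall, dist_zero_right] at this
    have h2 : ‖X ((n : ℝ≥0)) ω‖ ≤ R := by
      have := hKR h.2; rwa [Metric.mem_closedBall, dist_zero_right] at this
    have := norm_sub_le (X ((n : ℝ≥0) + 1) ω) (X (n : ℝ≥0) ω)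
    linarith
  rcases hout with h | h
  · refine lt_of_le_of_lt ?_ (ENNReal.coe_lt_top (r := (n : ℝ≥0) + 1))
    simp only [exitTime]
    exact iInf₂_le ((n : ℝ≥0) + 1) h
  · refine lt_of_le_of_lt ?_ (ENNReal.coe_lt_top (r := (n : ℝ≥0)))
    simp only [exitTime]
    exact iInf₂_le ((n : ℝ≥0)) h


end
end

section
/- Let b : ℝ → ℝ be given by b(x) = √x for x ≥ 0 and b(x) = −3√(−x) for x < 0, let r > 0, and let K = [−9r/4, r/4]. Then the minimal exit time of the ODE ξ' = b(ξ) from K starting at 0 equals √r: inf{τ_K(ξ) : ξ ∈ S_0(b)} = √r. -/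
open MeasureTheory Set Filter Topology
open scoped NNReal ENNReal

noncomputable section

/-- A solution of the one-dimensional ODE `ξ' = b(ξ)` on `[0,∞)` with initial value `x`. -/
def IsSol1 (b : ℝ → ℝ) (x : ℝ) (ξ : ℝ≥0 → ℝ) : Prop :=
  Continuous ξ ∧ ξ 0 = x ∧
    ∀ t : ℝ≥0, ξ t = x + ∫ s in (0:ℝ)..(t:ℝ), b (ξ s.toNNReal)

/-- Exit time of a path from `K`, valued in `[0,∞]`. -/
def exitTime1 (K : Set ℝ) (ξ : ℝ≥0 → ℝ) : ℝ≥0∞ :=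
  ⨅ t ∈ {t : ℝ≥0 | ξ t ∉ K}, (t : ℝ≥0∞)

/-- The leaving solutions starting from `0`. -/
def LS1 (b : ℝ → ℝ) : Set (ℝ≥0 → ℝ) :=
  {ξ | IsSol1 b 0 ξ ∧ ∃ τ : ℝ≥0, 0 < τ ∧ ∀ t : ℝ≥0, 0 < t → t < τ → ξ t ≠ 0}

open Classical in
/-- The non-symmetric field `b(x) = √x` for `x ≥ 0`, `b(x) = -3√(-x)` for `x < 0`. -/
def bns (x : ℝ) : ℝ := if 0 ≤ x then Real.sqrt x else -3 * Real.sqrt (-x)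

lemma bns_eq (x : ℝ) : bns x = Real.sqrt x - 3 * Real.sqrt (-x) := by
  unfold bns
  split_ifs with h
  · rw [Real.sqrt_eq_zero_of_nonpos (show -x ≤ 0 by linarith)]; ring
  · rw [Real.sqrt_eq_zero_of_nonpos (show x ≤ 0 by linarith)]; ring

lemma bns_cont : Continuous bns := by
  have h : bns = fun x => Real.sqrt x - 3 * Real.sqrt (-x) := funext bns_eq
  rw [h]
  exact Real.continuous_sqrt.sub
    ((continuous_const.mul (Real.continuous_sqrt.comp continuous_neg)))

/-- Barrier lemma: if `h 0 > 0` and at every positive zero of `h` the derivative exists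
and is positive, then `h` stays positive on `[0,∞)`. -/
lemma barrier_pos (h : ℝ → ℝ) (hc : Continuous h) (h0 : 0 < h 0)
    (hd : ∀ t, 0 < t → h t = 0 → ∃ d, 0 < d ∧ HasDerivAt h d t) :
    ∀ t, 0 ≤ t → 0 < h t := by
  by_contra hcon
  push_neg at hcon
  obtain ⟨t₀, ht₀, ht₀'⟩ := hcon
  set S : Set ℝ := {t | 0 ≤ t ∧ h t ≤ 0} with hS
  have hSne : S.Nonempty := ⟨t₀, ht₀, ht₀'⟩
  have hSclosed : IsClosed S := by
    have : S = Ici 0 ∩ h ⁻¹' (Iic 0) := by ext t; simp [hS, and_comm]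
    rw [this]
    exact isClosed_Ici.inter (isClosed_Iic.preimage hc)
  have hSbdd : BddBelow S := ⟨0, fun t ht => ht.1⟩
  set t₁ := sInf S with ht₁
  have ht₁S : t₁ ∈ S := hSclosed.csInf_mem hSne hSbdd
  have ht₁0 : 0 ≤ t₁ := ht₁S.1
  have hlt : ∀ t, 0 ≤ t → t < t₁ → 0 < h t := by
    intro t ht htlt
    by_contra hh
    push_neg at hh
    exact absurd (csInf_le hSbdd ⟨ht, hh⟩) (not_le.2 htlt)
  have ht₁pos : 0 < t₁ := by
    rcases ht₁0.lt_or_eq with h' | h'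
    · exact h'
    · exfalso
      have := ht₁S.2
      rw [← h'] at this
      linarith
  have ht₁z : h t₁ = 0 := by
    refine le_antisymm ht₁S.2 ?_
    have htend : Tendsto h (𝓝[<] t₁) (𝓝 (h t₁)) :=
      (hc.tendsto t₁).mono_left nhdsWithin_le_nhds
    refine ge_of_tendsto htend ?_
    filter_upwards [Ioo_mem_nhdsLT ht₁pos] with t ht
    exact (hlt t ht.1.le ht.2).le
  obtain ⟨d, hdpos, hder⟩ := hd t₁ ht₁pos ht₁z
  have hslope := hasDerivAt_iff_tendsto_slope.1 hder
  have hslope' : Tendsto (slope h t₁) (𝓝[<] t₁) (𝓝 d) :=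
    hslope.mono_left (nhdsWithin_mono _ fun t ht => ne_of_lt ht)
  have hdle : d ≤ 0 := by
    refine le_of_tendsto hslope' ?_
    filter_upwards [Ioo_mem_nhdsLT ht₁pos] with t ht
    have h1 : 0 < h t := hlt t ht.1.le ht.2
    rw [slope_def_field, ht₁z, sub_zero]
    exact div_nonpos_iff.2 (Or.inl ⟨h1.le, by linarith [ht.2]⟩)
  linarith

/-- From a solution we extract a real-variable function with the right derivative. -/
lemma exists_g (ξ : ℝ≥0 → ℝ) (hξ : IsSol1 bns 0 ξ) :
    ∃ g : ℝ → ℝ, Continuous g ∧ g 0 = 0 ∧ (∀ t : ℝ≥0, g (t:ℝ) = ξ t) ∧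
      ∀ t : ℝ, 0 < t → HasDerivAt g (bns (g t)) t := by
  obtain ⟨hcont, hzero, hint⟩ := hξ
  set g : ℝ → ℝ := fun t => ξ (Real.toNNReal t) with hg
  have hgc : Continuous g := hcont.comp continuous_real_toNNReal
  refine ⟨g, hgc, by simp [hg, hzero], fun t => by simp [hg], ?_⟩
  intro t ht
  have hF : HasDerivAt (fun u => ∫ s in (0:ℝ)..u, bns (g s)) (bns (g t)) t :=
    ((bns_cont.comp hgc).integral_hasStrictDerivAt 0 t).hasDerivAt
  refine hF.congr_of_eventuallyEq ?_
  filter_upwards [isOpen_Ioi.mem_nhds ht] with s hs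
  have hs0 : (0:ℝ) ≤ s := le_of_lt hs
  have h1 := hint s.toNNReal
  rw [Real.coe_toNNReal s hs0] at h1
  simpa [hg] using h1

lemma sol_upper (ξ : ℝ≥0 → ℝ) (hξ : IsSol1 bns 0 ξ) (t : ℝ≥0) :
    ξ t ≤ (t:ℝ)^2/4 := by
  obtain ⟨g, hgc, hg0, hgcoe, hgd⟩ := exists_g ξ hξ
  have key : ∀ ε : ℝ, 0 < ε → ∀ s : ℝ, 0 ≤ s → g s < (1/4+ε)*(s+ε)^2 := by
    intro ε hε
    obtain ⟨c, hc⟩ : ∃ c : ℝ, c = 1/4 + ε := ⟨_, rfl⟩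
    have hc4 : 1/4 < c := by rw [hc]; linarith
    have hcpos : 0 < c := by linarith
    have hsqc : Real.sqrt c < 2*c := by
      rw [Real.sqrt_lt' (by linarith)]
      nlinarith
    have hb : ∀ s, 0 ≤ s → 0 < c*(s+ε)^2 - g s := by
      apply barrier_pos
      · exact (continuous_const.mul ((continuous_id.add continuous_const).pow 2)).sub hgc
      · show (0:ℝ) < c*((0:ℝ)+ε)^2 - g 0
        rw [hg0, sub_zero]
        have := mul_pos hcpos (pow_pos (show (0:ℝ) < 0+ε by linarith) 2)
        linarith
      · intro s hs hhs
        have hhs' : c*(s+ε)^2 - g s = 0 := hhs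
        have hgs : g s = c*(s+ε)^2 := by linarith
        have hsε : 0 < s + ε := by linarith
        have h0 : HasDerivAt (fun y : ℝ => y + ε) 1 s := (hasDerivAt_id s).add_const ε
        have h1 : HasDerivAt (fun y : ℝ => c*(y+ε)^2) (c*(2*(s+ε))) s := by
          have h2 := (h0.pow 2).const_mul c
          refine h2.congr_deriv ?_
          push_cast
          ring
        have h3 : HasDerivAt (fun y => c*(y+ε)^2 - g y) (c*(2*(s+ε)) - bns (g s)) s :=
          h1.sub (hgd s hs)
        refine ⟨_, ?_, h3⟩
        have hbns : bns (g s) = Real.sqrt c * (s+ε) := by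
          rw [hgs, bns_eq, Real.sqrt_eq_zero_of_nonpos (show -(c*(s+ε)^2) ≤ 0 by nlinarith),
            Real.sqrt_mul hcpos.le, Real.sqrt_sq hsε.le]
          ring
        rw [hbns]
        nlinarith [mul_pos (show 0 < 2*c - Real.sqrt c by linarith) hsε]
    intro s hs
    have := hb s hs
    rw [hc] at this
    linarith
  by_contra hcon
  push_neg at hcon
  have hgt : g (t:ℝ) = ξ t := hgcoe t
  have hcAt : ContinuousAt (fun ε : ℝ => (1/4+ε)*((t:ℝ)+ε)^2) 0 := by fun_prop
  have hf0 : (1/4+(0:ℝ))*((t:ℝ)+0)^2 < ξ t := by nlinarith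
  have hev : ∀ᶠ ε in 𝓝 (0:ℝ), (1/4+ε)*((t:ℝ)+ε)^2 < ξ t :=
    hcAt.eventually_lt_const hf0
  obtain ⟨ε, hε1, hε2⟩ :=
    ((hev.filter_mono (nhdsWithin_le_nhds (s := Ioi (0:ℝ)))).and
      eventually_mem_nhdsWithin).exists
  have hk := key ε hε2 (t:ℝ) t.coe_nonneg
  rw [hgt] at hk
  linarith

lemma sol_lower (ξ : ℝ≥0 → ℝ) (hξ : IsSol1 bns 0 ξ) (t : ℝ≥0) :
    -(9*(t:ℝ)^2)/4 ≤ ξ t := by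
  obtain ⟨g, hgc, hg0, hgcoe, hgd⟩ := exists_g ξ hξ
  have key : ∀ ε : ℝ, 0 < ε → ∀ s : ℝ, 0 ≤ s → -((9/4+ε)*(s+ε)^2) < g s := by
    intro ε hε
    obtain ⟨c, hc⟩ : ∃ c : ℝ, c = 9/4 + ε := ⟨_, rfl⟩
    have hc4 : 9/4 < c := by rw [hc]; linarith
    have hcpos : 0 < c := by linarith
    have hsqc : 3 * Real.sqrt c < 2*c := by
      have : Real.sqrt c < 2*c/3 := by
        rw [Real.sqrt_lt' (by linarith)]
        nlinarith
      linarith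
    have hb : ∀ s, 0 ≤ s → 0 < g s + c*(s+ε)^2 := by
      apply barrier_pos
      · exact hgc.add (continuous_const.mul ((continuous_id.add continuous_const).pow 2))
      · show (0:ℝ) < g 0 + c*((0:ℝ)+ε)^2
        rw [hg0, zero_add]
        exact mul_pos hcpos (pow_pos (show (0:ℝ) < 0+ε by linarith) 2)
      · intro s hs hhs
        have hhs' : g s + c*(s+ε)^2 = 0 := hhs
        have hgs : g s = -(c*(s+ε)^2) := by linarith
        have hsε : 0 < s + ε := by linarith
        have h0 : HasDerivAt (fun y : ℝ => y + ε) 1 s := (hasDerivAt_id s).add_const ε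
        have h1 : HasDerivAt (fun y : ℝ => c*(y+ε)^2) (c*(2*(s+ε))) s := by
          have h2 := (h0.pow 2).const_mul c
          refine h2.congr_deriv ?_
          push_cast
          ring
        have h3 : HasDerivAt (fun y => g y + c*(y+ε)^2) (bns (g s) + c*(2*(s+ε))) s :=
          (hgd s hs).add h1
        refine ⟨_, ?_, h3⟩
        have hbns : bns (g s) = -(3 * (Real.sqrt c * (s+ε))) := by
          rw [hgs, bns_eq, Real.sqrt_eq_zero_of_nonpos (show -(c*(s+ε)^2) ≤ 0 by nlinarith), neg_neg,
            Real.sqrt_mul hcpos.le, Real.sqrt_sq hsε.le]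
          ring
        rw [hbns]
        nlinarith [mul_pos (show 0 < 2*c - 3*Real.sqrt c by linarith) hsε]
    intro s hs
    have := hb s hs
    rw [hc] at this
    linarith
  by_contra hcon
  push_neg at hcon
  have hgt : g (t:ℝ) = ξ t := hgcoe t
  have hcAt : ContinuousAt (fun ε : ℝ => -((9/4+ε)*((t:ℝ)+ε)^2)) 0 := by fun_prop
  have hf0 : ξ t < -((9/4+(0:ℝ))*((t:ℝ)+0)^2) := by nlinarith
  have hev : ∀ᶠ ε in 𝓝 (0:ℝ), ξ t < -((9/4+ε)*((t:ℝ)+ε)^2) :=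
    hcAt.eventually_const_lt hf0
  obtain ⟨ε, hε1, hε2⟩ :=
    ((hev.filter_mono (nhdsWithin_le_nhds (s := Ioi (0:ℝ)))).and
      eventually_mem_nhdsWithin).exists
  have hk := key ε hε2 (t:ℝ) t.coe_nonneg
  rw [hgt] at hk
  linarith

/-- for the non-symmetric field `bns` and `K = [-9r/4, r/4]`, the minimal
exit time from `K` of solutions starting at `0` equals `√r`. -/
theorem minimal_exit_time_nonsymmetric (r : ℝ) (hr : 0 < r) :
    (⨅ ξ ∈ {ξ : ℝ≥0 → ℝ | IsSol1 bns 0 ξ},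
      exitTime1 (Icc (-(9 * r) / 4) (r / 4)) ξ) = ENNReal.ofReal (Real.sqrt r) := by
  have hsqrt : (0:ℝ) ≤ Real.sqrt r := Real.sqrt_nonneg r
  have hsq : Real.sqrt r ^ 2 = r := Real.sq_sqrt hr.le
  apply le_antisymm
  · -- upper bound via explicit solution t²/4
    set ξ₀ : ℝ≥0 → ℝ := fun t => (t:ℝ)^2/4 with hξ₀def
    have hsol : IsSol1 bns 0 ξ₀ := by
      refine ⟨by fun_prop, by simp [hξ₀def], fun t => ?_⟩
      have hEq : EqOn (fun s : ℝ => bns (ξ₀ s.toNNReal)) (fun s => s/2)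
          (uIcc (0:ℝ) (t:ℝ)) := by
        intro s hs
        rw [uIcc_of_le t.coe_nonneg] at hs
        obtain ⟨hs0, _⟩ := hs
        simp only [hξ₀def]
        rw [Real.coe_toNNReal s hs0, bns_eq,
          show s^2/4 = (s/2)^2 by ring, Real.sqrt_sq (by linarith),
          Real.sqrt_eq_zero_of_nonpos (show -((s/2)^2) ≤ 0 from neg_nonpos.2 (sq_nonneg _))]
        ring
      rw [intervalIntegral.integral_congr hEq, intervalIntegral.integral_div,
        integral_id]
      simp [hξ₀def]
      ring
    refine iInf₂_le_of_le ξ₀ hsol ?_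
    refine ENNReal.le_of_forall_pos_le_add fun ε hε _ => ?_
    set tε : ℝ≥0 := Real.toNNReal (Real.sqrt r) + ε with htεdef
    have htε : (tε:ℝ) = Real.sqrt r + (ε:ℝ) := by
      rw [htεdef]
      push_cast
      rw [Real.coe_toNNReal _ hsqrt]
    have hεpos : (0:ℝ) < (ε:ℝ) := hε
    have hout : tε ∈ {t : ℝ≥0 | ξ₀ t ∉ Icc (-(9 * r) / 4) (r / 4)} := by
      simp only [mem_setOf_eq, hξ₀def, mem_Icc, not_and_or, not_le]
      right
      rw [htε]
      nlinarith
    calc exitTime1 (Icc (-(9 * r) / 4) (r / 4)) ξ₀ ≤ (tε : ℝ≥0∞) := by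
          unfold exitTime1
          exact iInf₂_le tε hout
      _ = ENNReal.ofReal (Real.sqrt r + (ε:ℝ)) := by
          rw [← ENNReal.ofReal_coe_nnreal, htε]
      _ = ENNReal.ofReal (Real.sqrt r) + ENNReal.ofReal (ε:ℝ) :=
          ENNReal.ofReal_add hsqrt ε.coe_nonneg
      _ = ENNReal.ofReal (Real.sqrt r) + (ε : ℝ≥0∞) := by
          rw [ENNReal.ofReal_coe_nnreal]
  · -- lower bound: every solution stays in K until time √r
    refine le_iInf₂ fun ξ hξ => ?_
    unfold exitTime1
    refine le_iInf₂ fun t ht => ?_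
    by_contra hlt
    push_neg at hlt
    apply ht
    have h1 : (t:ℝ) < Real.sqrt r := by
      rw [← ENNReal.ofReal_coe_nnreal] at hlt
      exact (ENNReal.ofReal_lt_ofReal_iff (Real.sqrt_pos.2 hr)).1 hlt
    have h2 : (t:ℝ)^2 ≤ r := by nlinarith [t.coe_nonneg]
    constructor
    · have := sol_lower ξ hξ t
      linarith
    · have := sol_upper ξ hξ t
      linarith

end
end

section
/- Let d = 2, define b : ℝ² → ℝ² by b(x) = 2x/|x|^{1/2} for x ≠ 0 and b(0) = 0, and let K̄ = {x ∈ ℝ² : |x| ≤ 1} be the closed unit ball. Then for every initial point x₀ = (a, b₀) with 0 < a² + b₀² ≤ 1 and every solution χ ∈ S_{x₀}(b), the exit time from K̄ satisfies τ_{K̄}(χ) = 1 − (a² + b₀²)^{1/4}. -/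
open MeasureTheory ProbabilityTheory Set Filter Topology
open scoped NNReal ENNReal RealInnerProductSpace

noncomputable section

open Classical in
/-- The radial field `b(x) = 2x/|x|^{1/2}` (with `b 0 = 0`) on `ℝ²`. -/
def brad (x : Ed 2) : Ed 2 := if x = 0 then 0 else (2 / Real.sqrt ‖x‖) • x

lemma brad_norm_le (x : Ed 2) : ‖brad x‖ ≤ 2 * Real.sqrt ‖x‖ := by
  by_cases h : x = 0
  · simp [brad, h, Real.sqrt_nonneg]
  · rw [brad, if_neg h, norm_smul]
    have hx : (0:ℝ) < ‖x‖ := norm_pos_iff.2 h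
    have hs : (0:ℝ) < Real.sqrt ‖x‖ := Real.sqrt_pos.2 hx
    rw [Real.norm_eq_abs, abs_of_nonneg (by positivity), div_mul_eq_mul_div, div_le_iff₀ hs]
    nlinarith [Real.mul_self_sqrt (norm_nonneg x)]

lemma brad_cont : Continuous brad := by
  rw [continuous_iff_continuousAt]
  intro x
  by_cases hx : x = 0
  · subst hx
    have h0 : brad 0 = 0 := by simp [brad]
    rw [ContinuousAt, h0]
    apply squeeze_zero_norm brad_norm_le
    have : Tendsto (fun y : Ed 2 => 2 * Real.sqrt ‖y‖) (𝓝 0) (𝓝 (2 * Real.sqrt ‖(0:Ed 2)‖)) :=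
      (continuous_const.mul (continuous_norm.sqrt)).tendsto 0
    simpa using this
  · have h : ContinuousAt (fun y : Ed 2 => (2 / Real.sqrt ‖y‖) • y) x := by
      have hs : Real.sqrt ‖x‖ ≠ 0 := ne_of_gt (Real.sqrt_pos.2 (norm_pos_iff.2 hx))
      exact ((continuousAt_const.div (continuous_norm.sqrt.continuousAt) hs).smul continuousAt_id)
    apply h.congr
    filter_upwards [compl_singleton_mem_nhds hx] with z hz
    simp only [mem_compl_iff, mem_singleton_iff] at hz
    simp [brad, hz]

lemma sqrt_norm_sol (x₀ : Ed 2) (hx₀ : x₀ ≠ 0) (χ : ℝ≥0 → Ed 2)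
    (hcont : Continuous χ)
    (hint : ∀ t : ℝ≥0, χ t = x₀ + ∫ s in (0:ℝ)..(t:ℝ), brad (χ s.toNNReal)) :
    ∀ t : ℝ≥0, Real.sqrt ‖χ t‖ = Real.sqrt ‖x₀‖ + t := by
  set f : ℝ → Ed 2 := fun s => brad (χ s.toNNReal) with hf
  have hfc : Continuous f := brad_cont.comp (hcont.comp continuous_real_toNNReal)
  set y : ℝ → Ed 2 := fun t => x₀ + ∫ s in (0:ℝ)..t, f s with hy
  have hyc : Continuous y :=
    continuous_const.add (intervalIntegral.continuous_primitive
      (fun a b => hfc.intervalIntegrable a b) 0)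
  have hyderiv : ∀ t, HasDerivAt y (f t) t := fun t =>
    (intervalIntegral.integral_hasDerivAt_right (hfc.intervalIntegrable _ _)
      (hfc.stronglyMeasurableAtFilter _ _) hfc.continuousAt).const_add x₀
  have hyeq : ∀ t : ℝ, 0 ≤ t → y t = χ t.toNNReal := by
    intro t ht
    rw [hint t.toNNReal, Real.coe_toNNReal t ht]
  have hy0 : y 0 = x₀ := by simp [hy]
  set u : ℝ → ℝ := fun t => Real.sqrt (Real.sqrt (⟪y t, y t⟫)) with hu
  have hunorm : ∀ t, u t = Real.sqrt ‖y t‖ := by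
    intro t
    simp only [hu, real_inner_self_eq_norm_sq, Real.sqrt_sq (norm_nonneg _)]
  have huc : Continuous u := ((hyc.inner hyc).sqrt).sqrt
  have key : ∀ t : ℝ, 0 ≤ t → y t ≠ 0 → HasDerivAt u 1 t := by
    intro t ht hne
    have hr : (0:ℝ) < ‖y t‖ := norm_pos_iff.2 hne
    have hq : ⟪y t, y t⟫ = ‖y t‖ ^ 2 := real_inner_self_eq_norm_sq _
    have hfy : f t = (2 / Real.sqrt ‖y t‖) • y t := by
      rw [hf]
      simp only []
      rw [← hyeq t ht, brad, if_neg hne]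
    have h1 : HasDerivAt (fun s => ⟪y s, y s⟫) (⟪y t, f t⟫ + ⟪f t, y t⟫) t :=
      (hyderiv t).inner ℝ (hyderiv t)
    have hq0 : ⟪y t, y t⟫ ≠ 0 := by rw [hq]; positivity
    have h2 := h1.sqrt hq0
    have hsq0 : Real.sqrt (⟪y t, y t⟫) ≠ 0 := by
      rw [hq, Real.sqrt_sq hr.le]; exact ne_of_gt hr
    have h3 := h2.sqrt hsq0
    convert h3 using 1
    set s := Real.sqrt ‖y t‖ with hsd
    have hs : 0 < s := Real.sqrt_pos.2 hr
    have hss : s * s = ‖y t‖ := Real.mul_self_sqrt hr.le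
    rw [hfy, real_inner_smul_right, real_inner_smul_left, hq, Real.sqrt_sq hr.le, ← hsd, ← hss]
    field_simp
    ring
  have const : ∀ T : ℝ, 0 ≤ T → (∀ s ∈ Ico (0:ℝ) T, y s ≠ 0) → u T - T = u 0 := by
    intro T hT hne
    have h : ∀ x ∈ Icc (0:ℝ) T, (fun t => u t - t) x = (fun t => u t - t) 0 := by
      apply constant_of_has_deriv_right_zero ((huc.sub continuous_id).continuousOn)
      intro s hs
      have hd : HasDerivAt (fun t => u t - t) 0 s := by
        exact ((key s hs.1 (hne s hs)).sub (hasDerivAt_id s)).congr_deriv (by norm_num)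
      exact hd.hasDerivWithinAt
    simpa using h T ⟨hT, le_refl T⟩
  have hnv : ∀ t : ℝ, 0 ≤ t → y t ≠ 0 := by
    by_contra hcon
    push_neg at hcon
    obtain ⟨t₀, ht₀, hz⟩ := hcon
    set Z : Set ℝ := Ici 0 ∩ y ⁻¹' {0} with hZ
    have hZne : Z.Nonempty := ⟨t₀, ht₀, hz⟩
    have hZcl : IsClosed Z := isClosed_Ici.inter (isClosed_singleton.preimage hyc)
    have hbd : BddBelow Z := ⟨0, fun z hz => hz.1⟩
    set T := sInf Z with hT
    have hTZ : T ∈ Z := hZcl.csInf_mem hZne hbd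
    have hT0 : (0:ℝ) ≤ T := hTZ.1
    have hTpos : 0 < T := by
      rcases hT0.lt_or_eq with h | h
      · exact h
      · exact absurd (h ▸ hTZ.2 : y 0 ∈ ({0}:Set (Ed 2))) (by simp [hy0, hx₀])
    have hlt : ∀ s ∈ Ico (0:ℝ) T, y s ≠ 0 := fun s hs h =>
      absurd (csInf_le hbd ⟨hs.1, h⟩) (not_le.2 hs.2)
    have hcst := const T hT0 hlt
    have huT : u T = 0 := by
      have : y T = 0 := hTZ.2
      rw [hu]; simp [this]
    have hu0 : 0 < u 0 := by
      rw [hunorm, hy0]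
      exact Real.sqrt_pos.2 (norm_pos_iff.2 hx₀)
    linarith
  intro t
  have h1 := const (t : ℝ) t.coe_nonneg (fun s hs => hnv s hs.1)
  have h2 : u 0 = Real.sqrt ‖x₀‖ := by rw [hunorm, hy0]
  have h3 : u (t : ℝ) = Real.sqrt ‖χ t‖ := by
    rw [hunorm, hyeq (t : ℝ) t.coe_nonneg, Real.toNNReal_coe]
  linarith

/-- for the radial field on `ℝ²` and the closed unit ball, every solution
starting from `(a, b₀)` with `0 < a² + b₀² ≤ 1` exits the ball exactly at time
`1 - (a² + b₀²)^{1/4}`. -/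
theorem radial_field_exit_time_from_unit_ball (a b₀ : ℝ)
    (hpos : 0 < a ^ 2 + b₀ ^ 2) (hle : a ^ 2 + b₀ ^ 2 ≤ 1)
    (χ : ℝ≥0 → Ed 2)
    (hχ : IsSol brad ((EuclideanSpace.equiv (Fin 2) ℝ).symm ![a, b₀]) χ) :
    exitTime (Metric.closedBall (0 : Ed 2) 1) χ =
      ENNReal.ofReal (1 - (a ^ 2 + b₀ ^ 2) ^ ((1 : ℝ) / 4)) := by
  obtain ⟨hc, h0, hint⟩ := hχ
  set x₀ : Ed 2 := (EuclideanSpace.equiv (Fin 2) ℝ).symm ![a, b₀] with hx₀def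
  have hnorm : ‖x₀‖ = Real.sqrt (a ^ 2 + b₀ ^ 2) := by
    rw [hx₀def, EuclideanSpace.norm_eq]
    congr 1
    simp [Fin.sum_univ_two, EuclideanSpace.equiv, Real.norm_eq_abs, sq_abs]
  have hx0 : x₀ ≠ 0 := by
    rw [← norm_pos_iff, hnorm]; exact Real.sqrt_pos.2 hpos
  have hkey := sqrt_norm_sol x₀ hx0 χ hc hint
  set c : ℝ := Real.sqrt (Real.sqrt (a ^ 2 + b₀ ^ 2)) with hcdef
  have hc0 : 0 < c := Real.sqrt_pos.2 (Real.sqrt_pos.2 hpos)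
  have hc1 : c ≤ 1 := Real.sqrt_le_one.2 (Real.sqrt_le_one.2 hle)
  have hnormχ : ∀ t : ℝ≥0, ‖χ t‖ = (c + (t : ℝ)) ^ 2 := by
    intro t
    have h := hkey t
    rw [hnorm, ← hcdef] at h
    calc ‖χ t‖ = Real.sqrt ‖χ t‖ ^ 2 := (Real.sq_sqrt (norm_nonneg _)).symm
      _ = (c + (t : ℝ)) ^ 2 := by rw [h]
  have hmem : ∀ t : ℝ≥0, (χ t ∉ Metric.closedBall (0 : Ed 2) 1) ↔ 1 - c < (t : ℝ) := by
    intro t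
    rw [Metric.mem_closedBall, dist_zero_right, not_le, hnormχ]
    constructor
    · intro h
      nlinarith [t.coe_nonneg]
    · intro h
      nlinarith [t.coe_nonneg]
  set s : ℝ≥0 := ⟨1 - c, by linarith⟩ with hs
  have hsc : (s : ℝ) = 1 - c := rfl
  have hset : {t : ℝ≥0 | χ t ∉ Metric.closedBall (0 : Ed 2) 1} = {t : ℝ≥0 | s < t} := by
    ext t
    simp only [mem_setOf_eq, hmem, ← NNReal.coe_lt_coe, hsc]
  rw [exitTime, hset]
  have hval : (⨅ t ∈ {t : ℝ≥0 | s < t}, (t : ℝ≥0∞)) = (s : ℝ≥0∞) := by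
    apply le_antisymm
    · refine ENNReal.le_of_forall_pos_le_add fun ε hε _ => ?_
      have hmem' : s + ε ∈ {t : ℝ≥0 | s < t} := lt_add_of_pos_right s hε
      calc (⨅ t ∈ {t : ℝ≥0 | s < t}, (t : ℝ≥0∞)) ≤ ((s + ε : ℝ≥0) : ℝ≥0∞) :=
            biInf_le _ hmem'
        _ = (s : ℝ≥0∞) + ε := by push_cast; rfl
    · exact le_iInf₂ fun t ht => ENNReal.coe_le_coe.2 (le_of_lt ht)
  rw [hval]
  have hrpow : (a ^ 2 + b₀ ^ 2) ^ ((1 : ℝ) / 4) = c := by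
    rw [hcdef, Real.sqrt_eq_rpow, Real.sqrt_eq_rpow, ← Real.rpow_mul hpos.le]
    norm_num
  rw [hrpow]
  exact (ENNReal.ofReal_eq_coe_nnreal _).symm

end
end
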